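/- arXiv:2312.05470 — 6 statements merged into one kernel-verified Lean document; each statement's English description precedes it below -/
import Mathlib

section
/- Let K be a rate constant matrix with stationary distribution π and S ⊆ [n] with K_{SS} nonsingular, T = [n]\S. Then the Schur complement D = K_{TT} − K_{TS}K_{SS}⁻¹K_{ST} is again a rate constant matrix with stationary distribution proportional to π_T: D has nonnegative off-diagonal entries, zero column sums (1_Tᵀ D = 0ᵀ), and satisfies D Π_T = Π_T Dᵀ where Π_T = diag(π_T). -/
/-!
The block `K_SS` has nonnegative off-diagonal entries and nonpositive column sums (the rate
leaking into `T`). A maximum principle for `xᵀ K_SS` shows that such a matrix with strictly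
negative column sums has an entrywise nonpositive inverse; perturbing by `-ε I` and letting
`ε → 0` removes strictness when `K_SS` is nonsingular. Hence `K_TS K_SS⁻¹ K_ST ≤ 0`, and `D`
inherits the nonnegative off-diagonal entries of `K_TT`. Zero column sums and detailed balance
are block identities: eliminate the `S`-component from `1ᵀ K = 0`, and from `K Π = Π Kᵀ` using
`K_SS⁻¹ Π_S = Π_S K_SS⁻ᵀ`.
-/

open Matrix Filter Topology

namespace Matrix

section Metzler

variable {ι : Type*} [Fintype ι]

theorem nonpos_of_vecMul_nonneg {A : Matrix ι ι ℝ} (hoff : ∀ i j, i ≠ j → 0 ≤ A i j)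
    (hcol : ∀ j, ∑ i, A i j < 0) {x : ι → ℝ} (hx : ∀ j, 0 ≤ (x ᵥ* A) j) (i : ι) :
    x i ≤ 0 := by
  obtain ⟨j, -, hj⟩ := Finset.univ.exists_max_image x ⟨i, Finset.mem_univ i⟩
  by_contra! hpos
  have hxj : 0 < x j := hpos.trans_le (hj i (Finset.mem_univ i))
  have : (x ᵥ* A) j ≤ x j * ∑ k, A k j := by
    rw [vecMul, dotProduct, Finset.mul_sum]
    refine Finset.sum_le_sum fun k _ => ?_
    rcases eq_or_ne k j with rfl | hkj
    · rfl
    · rw [mul_comm (x k), mul_comm (x j)]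
      exact mul_le_mul_of_nonneg_left (hj k (Finset.mem_univ k)) (hoff k j hkj)
  linarith [hx j, mul_neg_of_pos_of_neg hxj (hcol j)]

variable [DecidableEq ι]

theorem inv_apply_nonpos_of_sum_neg {A : Matrix ι ι ℝ} (hoff : ∀ i j, i ≠ j → 0 ≤ A i j)
    (hcol : ∀ j, ∑ i, A i j < 0) (a b : ι) : A⁻¹ a b ≤ 0 := by
  by_cases hA : IsUnit A.det
  · refine nonpos_of_vecMul_nonneg hoff hcol (x := A⁻¹ a) (fun j => ?_) b
    have : (A⁻¹ a ᵥ* A) j = (A⁻¹ * A) a j := rfl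
    rw [this, nonsing_inv_mul A hA, one_apply]
    positivity
  · simp [nonsing_inv_apply_not_isUnit A hA]

theorem inv_apply_nonpos_of_sum_nonpos {A : Matrix ι ι ℝ} (hoff : ∀ i j, i ≠ j → 0 ≤ A i j)
    (hcol : ∀ j, ∑ i, A i j ≤ 0) (hA : IsUnit A.det) (a b : ι) : A⁻¹ a b ≤ 0 := by
  have hinv : ContinuousAt Inv.inv A := continuousAt_matrix_inv A <| by
    rw [Ring.inverse_eq_inv']
    exact continuousAt_inv₀ hA.ne_zero
  have hpert : Tendsto (fun ε : ℝ => A - ε • 1) (𝓝[>] 0) (𝓝 A) := by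
    have : Continuous (fun ε : ℝ => A - ε • (1 : Matrix ι ι ℝ)) := by fun_prop
    simpa using (this.tendsto 0).mono_left nhdsWithin_le_nhds
  have hentry : Tendsto (fun ε : ℝ => (A - ε • 1)⁻¹ a b) (𝓝[>] 0) (𝓝 (A⁻¹ a b)) :=
    ((continuous_id.matrix_elem a b).tendsto _).comp (hinv.tendsto.comp hpert)
  refine le_of_tendsto hentry (eventually_nhdsWithin_of_forall fun ε (hε : 0 < ε) => ?_)
  refine inv_apply_nonpos_of_sum_neg (fun i j hij => ?_) (fun j => ?_) a b
  · simpa [hij] using hoff i j hij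
  · simp only [sub_apply, smul_apply, one_apply, Finset.sum_sub_distrib, smul_eq_mul,
      mul_ite, mul_one, mul_zero, Finset.sum_ite_eq', Finset.mem_univ, if_true]
    linarith [hcol j]

end Metzler

section SchurComplement

variable {m t R : Type*} [Fintype m] [DecidableEq m] [Fintype t] [CommRing R]
  {A : Matrix m m R} {B : Matrix m t R} {C : Matrix t m R} {D : Matrix t t R}

theorem vecMul_schur_eq_zero (hA : IsUnit A.det) {u : t → R} {v : m → R}
    (hAC : v ᵥ* A + u ᵥ* C = 0) (hBD : v ᵥ* B + u ᵥ* D = 0) :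
    u ᵥ* (D - C * A⁻¹ * B) = 0 := by
  have hC : u ᵥ* C = -(v ᵥ* A) := eq_neg_of_add_eq_zero_right hAC
  have hD : u ᵥ* D = -(v ᵥ* B) := eq_neg_of_add_eq_zero_right hBD
  rw [vecMul_sub, ← vecMul_vecMul, ← vecMul_vecMul, hC, neg_vecMul, neg_vecMul, vecMul_vecMul v A,
    mul_nonsing_inv A hA, vecMul_one, hD, sub_self]

theorem inv_mul_eq_mul_inv_transpose {P : Matrix m m R} (hA : A * P = P * Aᵀ) :
    A⁻¹ * P = P * A⁻¹ᵀ := by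
  by_cases hdet : IsUnit A.det
  · have hdetT : IsUnit Aᵀ.det := by rwa [det_transpose]
    calc A⁻¹ * P = A⁻¹ * (P * Aᵀ) * Aᵀ⁻¹ := by
          simp only [Matrix.mul_assoc, mul_nonsing_inv _ hdetT, Matrix.mul_one]
      _ = A⁻¹ * (A * P) * Aᵀ⁻¹ := by rw [hA]
      _ = P * A⁻¹ᵀ := by
          rw [← Matrix.mul_assoc, nonsing_inv_mul _ hdet, Matrix.one_mul, transpose_nonsing_inv]
  · simp [nonsing_inv_apply_not_isUnit A hdet]

theorem schur_mul_eq_mul_schur_transpose {P : Matrix m m R} {Q : Matrix t t R}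
    (hP : P.IsSymm) (hQ : Q.IsSymm) (hA : A * P = P * Aᵀ) (hB : B * Q = P * Cᵀ)
    (hD : D * Q = Q * Dᵀ) :
    (D - C * A⁻¹ * B) * Q = Q * (D - C * A⁻¹ * B)ᵀ := by
  have hC : C * P = Q * Bᵀ := by
    simpa [transpose_mul, hP.eq, hQ.eq] using (congrArg transpose hB).symm
  calc (D - C * A⁻¹ * B) * Q = D * Q - C * (A⁻¹ * P) * Cᵀ := by
        rw [Matrix.sub_mul, Matrix.mul_assoc (C * A⁻¹), hB, Matrix.mul_assoc, Matrix.mul_assoc,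
          Matrix.mul_assoc]
    _ = Q * Dᵀ - (C * P) * (A⁻¹ᵀ * Cᵀ) := by
        rw [hD, inv_mul_eq_mul_inv_transpose hA, Matrix.mul_assoc, Matrix.mul_assoc,
          Matrix.mul_assoc]
    _ = Q * (D - C * A⁻¹ * B)ᵀ := by
        rw [hC, transpose_sub, transpose_mul, transpose_mul, Matrix.mul_sub]
        simp only [Matrix.mul_assoc]

end SchurComplement

theorem mul_mul_apply_nonpos {m n p q R : Type*} [Fintype m] [Fintype n] [Ring R] [PartialOrder R]
    [IsOrderedRing R] {C : Matrix p m R} {N : Matrix m n R} {B : Matrix n q R}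
    (hC : ∀ i j, 0 ≤ C i j) (hN : ∀ i j, N i j ≤ 0) (hB : ∀ i j, 0 ≤ B i j) (i : p) (j : q) :
    (C * N * B) i j ≤ 0 :=
  Finset.sum_nonpos fun b _ => mul_nonpos_of_nonpos_of_nonneg
    (Finset.sum_nonpos fun a _ => mul_nonpos_of_nonneg_of_nonpos (hC i a) (hN a b)) (hB b j)

section Blocks

variable {ι : Type*} [Fintype ι] [DecidableEq ι]

theorem submatrix_mul_diagonal_eq {R α β : Type*} [CommSemiring R] [Fintype α]
    [Fintype β] [DecidableEq α] [DecidableEq β]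
    {K : Matrix ι ι R} {π : ι → R} (hK : K * diagonal π = diagonal π * Kᵀ)
    (f : α → ι) (g : β → ι) :
    K.submatrix f g * diagonal (π ∘ g) = diagonal (π ∘ f) * (K.submatrix g f)ᵀ := by
  ext i j
  simpa [mul_diagonal, diagonal_mul] using congrFun (congrFun hK (f i)) (g j)

theorem one_vecMul_submatrix_add_compl_eq_zero {R κ : Type*} [CommRing R] {K : Matrix ι ι R}
    (hK : ∀ j, ∑ i, K i j = 0) (S : Finset ι) (g : κ → ι) :
    (1 : S → R) ᵥ* K.submatrix (↑) g + (1 : ↥Sᶜ → R) ᵥ* K.submatrix (↑) g = 0 := by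
  funext c
  simp only [Pi.add_apply, vecMul, dotProduct, Pi.one_apply, one_mul, submatrix_apply,
    Pi.zero_apply]
  rw [Finset.sum_coe_sort S (K · (g c)), Finset.sum_coe_sort Sᶜ (K · (g c)),
    Finset.sum_add_sum_compl, hK]

end Blocks

end Matrix

theorem rcmc_stmt5_general (n : ℕ) (K : Matrix (Fin n) (Fin n) ℝ) (π : Fin n → ℝ)
    (hoff : ∀ i j, i ≠ j → 0 ≤ K i j)
    (hcol : ∀ j, ∑ i, K i j = 0)
    (hdb : K * Matrix.diagonal π = Matrix.diagonal π * Kᵀ)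
    (S : Finset (Fin n))
    (hinv : IsUnit (K.submatrix ((↑) : ↥S → Fin n) ((↑) : ↥S → Fin n)).det) :
    let KSS := K.submatrix ((↑) : ↥S → Fin n) ((↑) : ↥S → Fin n)
    let KST := K.submatrix ((↑) : ↥S → Fin n) ((↑) : ↥(Sᶜ) → Fin n)
    let KTS := K.submatrix ((↑) : ↥(Sᶜ) → Fin n) ((↑) : ↥S → Fin n)
    let KTT := K.submatrix ((↑) : ↥(Sᶜ) → Fin n) ((↑) : ↥(Sᶜ) → Fin n)
    let D := KTT - KTS * KSS⁻¹ * KST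
    (∀ i j : ↥(Sᶜ), i ≠ j → 0 ≤ D i j) ∧
    (∀ j : ↥(Sᶜ), ∑ i : ↥(Sᶜ), D i j = 0) ∧
    D * Matrix.diagonal (fun i : ↥(Sᶜ) => π ↑i)
      = Matrix.diagonal (fun i : ↥(Sᶜ) => π ↑i) * Dᵀ := by
  intro KSS KST KTS KTT D
  have hdisj : ∀ (a : S) (i : ↥Sᶜ), (a : Fin n) ≠ i := fun a i h =>
    Finset.mem_compl.1 i.2 (h ▸ a.2)
  have hcolS := one_vecMul_submatrix_add_compl_eq_zero hcol S ((↑) : ↥S → Fin n)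
  have hcolT := one_vecMul_submatrix_add_compl_eq_zero hcol S ((↑) : ↥Sᶜ → Fin n)
  have hKSS_inv : ∀ a b, KSS⁻¹ a b ≤ 0 := by
    refine inv_apply_nonpos_of_sum_nonpos (fun a b hab => hoff _ _ (Subtype.coe_injective.ne hab))
      (fun b => ?_) hinv
    have := congrFun hcolS b
    simp only [Pi.add_apply, vecMul, dotProduct, Pi.one_apply, one_mul, Pi.zero_apply,
      submatrix_apply] at this
    change ∑ a : S, K a b ≤ 0
    linarith [Finset.sum_nonneg fun i (_ : i ∈ Finset.univ) => hoff _ _ (hdisj b i).symm]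
  refine ⟨fun i j hij => ?_, fun j => ?_, ?_⟩
  · have hKTT : 0 ≤ KTT i j := hoff _ _ (Subtype.coe_injective.ne hij)
    have hcorr := mul_mul_apply_nonpos (C := KTS) (B := KST) (fun i a => hoff _ _ (hdisj a i).symm)
      hKSS_inv (fun a j => hoff _ _ (hdisj a j)) i j
    exact sub_nonneg.2 (hcorr.trans hKTT)
  · simpa only [vecMul, dotProduct, Pi.one_apply, one_mul, Pi.zero_apply]
      using congrFun (vecMul_schur_eq_zero hinv hcolS hcolT) j
  · exact schur_mul_eq_mul_schur_transpose (isSymm_diagonal _) (isSymm_diagonal _)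
      (submatrix_mul_diagonal_eq hdb _ _) (submatrix_mul_diagonal_eq hdb _ _)
      (submatrix_mul_diagonal_eq hdb _ _)

/-- The Schur complement `D = K_TT − K_TS K_SS⁻¹ K_ST` of a nonsingular
principal submatrix `K_SS` of a rate constant matrix `K` is again a rate constant matrix
with stationary distribution proportional to `π_T`: it has nonnegative off-diagonal
entries, zero column sums, and satisfies detailed balance `D Π_T = Π_T Dᵀ`. -/
theorem rcmc_stmt5 (n : ℕ) (K : Matrix (Fin n) (Fin n) ℝ) (π : Fin n → ℝ)
    (hoff : ∀ i j, i ≠ j → 0 ≤ K i j)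
    (hcol : ∀ j, ∑ i, K i j = 0)
    (hπpos : ∀ i, 0 < π i) (hπsum : ∑ i, π i = 1)
    (hdb : K * Matrix.diagonal π = Matrix.diagonal π * Kᵀ)
    (S : Finset (Fin n))
    (hinv : IsUnit (K.submatrix ((↑) : ↥S → Fin n) ((↑) : ↥S → Fin n)).det) :
    let KSS := K.submatrix ((↑) : ↥S → Fin n) ((↑) : ↥S → Fin n)
    let KST := K.submatrix ((↑) : ↥S → Fin n) ((↑) : ↥(Sᶜ) → Fin n)
    let KTS := K.submatrix ((↑) : ↥(Sᶜ) → Fin n) ((↑) : ↥S → Fin n)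
    let KTT := K.submatrix ((↑) : ↥(Sᶜ) → Fin n) ((↑) : ↥(Sᶜ) → Fin n)
    let D := KTT - KTS * KSS⁻¹ * KST
    (∀ i j : ↥(Sᶜ), i ≠ j → 0 ≤ D i j) ∧
    (∀ j : ↥(Sᶜ), ∑ i : ↥(Sᶜ), D i j = 0) ∧
    D * Matrix.diagonal (fun i : ↥(Sᶜ) => π ↑i)
      = Matrix.diagonal (fun i : ↥(Sᶜ) => π ↑i) * Dᵀ :=
  rcmc_stmt5_general n K π hoff hcol hdb S hinv
end

section
/- Let K be a rate constant matrix with detailed balance, {S,T} a bipartition of [n] with K_{SS} nonsingular. A matrix V ∈ ℝ^{n×n} is π-self-adjoint and has its image contained in the QSSA subspace W = {y : K_{SS}y_S + K_{ST}y_T = 0} if and only if V has block form V_{SS} = K_{SS}⁻¹K_{ST}V_{TT}K_{TS}K_{SS}⁻¹, V_{ST} = −K_{SS}⁻¹K_{ST}V_{TT}, V_{TS} = −V_{TT}K_{TS}K_{SS}⁻¹ for some π-self-adjoint block V_{TT} ∈ ℝ^{T×T}. -/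
/-!
Write `P`, `Q` for the diagonal blocks of `diag π` on `S`, `T = Sᶜ`, and set
`G = K_SS⁻¹ K_ST`, `H = K_TS K_SS⁻¹`. Detailed balance makes `K_SS⁻¹` `P`-self-adjoint, hence
`G Q = P Hᵀ`. The image of `V` lies in `W` iff the `S`-rows of `V` are `-G` times its `T`-rows.
Given this, self-adjointness of `V` gives `V_TS P = Q V_STᵀ = -V_TT Q Gᵀ = -V_TT H P`, so
`V_TS = -V_TT H` and `V_SS = G V_TT H`; conversely these blocks are self-adjoint whenever
`V_TT` is.
-/

open Matrix

namespace Matrix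

section Submatrix

variable {l m n o α : Type*}

theorem submatrix_mul_diagonal [Fintype n] [Fintype o] [DecidableEq n] [DecidableEq o]
    [NonUnitalNonAssocSemiring α] (M : Matrix m n α) (d : n → α) (u : l → m) (v : o → n) :
    (M * diagonal d).submatrix u v = M.submatrix u v * diagonal (fun j => d (v j)) := by
  ext i j
  simp [mul_diagonal]

theorem submatrix_diagonal_mul_transpose [Fintype n] [Fintype l] [DecidableEq n] [DecidableEq l]
    [NonUnitalNonAssocSemiring α] (M : Matrix m n α) (d : n → α) (u : l → n) (v : o → m) :
    (diagonal d * Mᵀ).submatrix u v = diagonal (fun i => d (u i)) * (M.submatrix v u)ᵀ := by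
  ext i j
  simp [diagonal_mul]

theorem forall_mulVec_apply_eq_zero_iff [Fintype n] [DecidableEq n] [NonAssocSemiring α]
    (M : Matrix m n α) (u : l → m) :
    (∀ p, ∀ i, (M *ᵥ p) (u i) = 0) ↔ M.submatrix u id = 0 := by
  rw [ext_iff_mulVec]
  simp only [zero_mulVec, funext_iff]
  rfl

end Submatrix

section Blocks

variable {ι m α : Type*} [Fintype ι] [DecidableEq ι] (S : Finset ι)

theorem ext_iff_submatrix_compl_cols {M N : Matrix m ι α} :
    M = N ↔ M.submatrix id ((↑) : S → ι) = N.submatrix id (↑) ∧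
      M.submatrix id ((↑) : ↥Sᶜ → ι) = N.submatrix id (↑) := by
  refine ⟨by rintro rfl; exact ⟨rfl, rfl⟩, fun ⟨hS, hT⟩ => ?_⟩
  ext i j
  by_cases hj : j ∈ S
  · exact congr_fun₂ hS i ⟨j, hj⟩
  · exact congr_fun₂ hT i ⟨j, Finset.mem_compl.mpr hj⟩

theorem ext_iff_submatrix_compl {M N : Matrix ι ι α} :
    M = N ↔
      M.submatrix ((↑) : S → ι) ((↑) : S → ι) = N.submatrix (↑) (↑) ∧
      M.submatrix ((↑) : S → ι) ((↑) : ↥Sᶜ → ι) = N.submatrix (↑) (↑) ∧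
      M.submatrix ((↑) : ↥Sᶜ → ι) ((↑) : S → ι) = N.submatrix (↑) (↑) ∧
      M.submatrix ((↑) : ↥Sᶜ → ι) ((↑) : ↥Sᶜ → ι) = N.submatrix (↑) (↑) := by
  refine ⟨by rintro rfl; exact ⟨rfl, rfl, rfl, rfl⟩, fun ⟨hSS, hST, hTS, hTT⟩ => ?_⟩
  ext i j
  have mem_compl {k : ι} (hk : k ∉ S) : k ∈ Sᶜ := Finset.mem_compl.mpr hk
  by_cases hi : i ∈ S <;> by_cases hj : j ∈ S
  · exact congr_fun₂ hSS ⟨i, hi⟩ ⟨j, hj⟩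
  · exact congr_fun₂ hST ⟨i, hi⟩ ⟨j, mem_compl hj⟩
  · exact congr_fun₂ hTS ⟨i, mem_compl hi⟩ ⟨j, hj⟩
  · exact congr_fun₂ hTT ⟨i, mem_compl hi⟩ ⟨j, mem_compl hj⟩

theorem submatrix_mul_eq_add_compl [NonUnitalNonAssocSemiring α] {κ μ : Type*}
    (A B : Matrix ι ι α) (u : κ → ι) (v : μ → ι) :
    (A * B).submatrix u v =
      A.submatrix u ((↑) : S → ι) * B.submatrix ((↑) : S → ι) v +
        A.submatrix u ((↑) : ↥Sᶜ → ι) * B.submatrix ((↑) : ↥Sᶜ → ι) v := by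
  ext i j
  simp only [submatrix_apply, Matrix.mul_apply, add_apply]
  rw [Finset.sum_coe_sort S (fun k => A (u i) k * B k (v j)),
    Finset.sum_coe_sort Sᶜ (fun k => A (u i) k * B k (v j)), Finset.sum_add_sum_compl]

theorem mul_diagonal_eq_diagonal_mul_transpose_iff_submatrix_compl [NonUnitalNonAssocSemiring α]
    (M : Matrix ι ι α) (d : ι → α) :
    M * diagonal d = diagonal d * Mᵀ ↔
      M.submatrix ((↑) : S → ι) ((↑) : S → ι) * diagonal (fun i : S => d i) =
          diagonal (fun i : S => d i) * (M.submatrix ((↑) : S → ι) ((↑) : S → ι))ᵀ ∧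
        M.submatrix ((↑) : S → ι) ((↑) : ↥Sᶜ → ι) * diagonal (fun i : ↥Sᶜ => d i) =
          diagonal (fun i : S => d i) * (M.submatrix ((↑) : ↥Sᶜ → ι) ((↑) : S → ι))ᵀ ∧
        M.submatrix ((↑) : ↥Sᶜ → ι) ((↑) : S → ι) * diagonal (fun i : S => d i) =
          diagonal (fun i : ↥Sᶜ => d i) * (M.submatrix ((↑) : S → ι) ((↑) : ↥Sᶜ → ι))ᵀ ∧
        M.submatrix ((↑) : ↥Sᶜ → ι) ((↑) : ↥Sᶜ → ι) * diagonal (fun i : ↥Sᶜ => d i) =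
          diagonal (fun i : ↥Sᶜ => d i) * (M.submatrix ((↑) : ↥Sᶜ → ι) ((↑) : ↥Sᶜ → ι))ᵀ := by
  rw [ext_iff_submatrix_compl S]
  simp only [submatrix_mul_diagonal, submatrix_diagonal_mul_transpose]

theorem forall_mulVec_mulVec_apply_eq_zero_iff_submatrix_compl [Semiring α]
    (K V : Matrix ι ι α) :
    (∀ p : ι → α, ∀ i : S, (K *ᵥ (V *ᵥ p)) i = 0) ↔
      K.submatrix ((↑) : S → ι) ((↑) : S → ι) * V.submatrix ((↑) : S → ι) ((↑) : S → ι) +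
          K.submatrix ((↑) : S → ι) ((↑) : ↥Sᶜ → ι) *
            V.submatrix ((↑) : ↥Sᶜ → ι) ((↑) : S → ι) = 0 ∧
        K.submatrix ((↑) : S → ι) ((↑) : S → ι) * V.submatrix ((↑) : S → ι) ((↑) : ↥Sᶜ → ι) +
          K.submatrix ((↑) : S → ι) ((↑) : ↥Sᶜ → ι) *
            V.submatrix ((↑) : ↥Sᶜ → ι) ((↑) : ↥Sᶜ → ι) = 0 := by
  simp only [mulVec_mulVec]
  rw [forall_mulVec_apply_eq_zero_iff, ext_iff_submatrix_compl_cols S]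
  simp only [submatrix_zero, submatrix_mul_eq_add_compl S]
  rfl

end Blocks

section Weighted

variable {R s t : Type*} [CommRing R] [Fintype s] [Fintype t] [DecidableEq s]

theorem nonsing_inv_mul_eq_mul_transpose_of_mul_eq_mul_transpose {A P : Matrix s s R}
    (h : A * P = P * Aᵀ) : A⁻¹ * P = P * A⁻¹ᵀ := by
  by_cases hA : IsUnit A.det
  · have hAT : IsUnit Aᵀ.det := by rwa [det_transpose]
    calc A⁻¹ * P = A⁻¹ * (P * Aᵀ) * Aᵀ⁻¹ := by
          rw [← Matrix.mul_assoc, mul_nonsing_inv_cancel_right _ _ hAT]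
      _ = P * A⁻¹ᵀ := by
          rw [← h, ← Matrix.mul_assoc, nonsing_inv_mul _ hA, Matrix.one_mul, transpose_nonsing_inv]
  · simp [nonsing_inv_apply_not_isUnit _ hA]

theorem mul_add_mul_eq_zero_iff {A : Matrix s s R} (hA : IsUnit A.det) (B : Matrix s t R)
    {u : Type*} (X : Matrix s u R) (Z : Matrix t u R) :
    A * X + B * Z = 0 ↔ X = -(A⁻¹ * B * Z) := by
  rw [add_eq_zero_iff_eq_neg]
  constructor
  · intro h
    rw [← nonsing_inv_mul_cancel_left A X hA, h, Matrix.mul_neg, Matrix.mul_assoc]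
  · rintro rfl
    rw [Matrix.mul_neg, Matrix.mul_assoc, mul_nonsing_inv_cancel_left _ _ hA]

variable [DecidableEq t] {p : s → R} {q : t → R}

theorem nonsing_inv_mul_mul_diagonal {A : Matrix s s R} {B : Matrix s t R} {C : Matrix t s R}
    (hA : A * diagonal p = diagonal p * Aᵀ) (hBC : B * diagonal q = diagonal p * Cᵀ) :
    A⁻¹ * B * diagonal q = diagonal p * (C * A⁻¹)ᵀ := by
  rw [Matrix.mul_assoc, hBC, ← Matrix.mul_assoc,
    nonsing_inv_mul_eq_mul_transpose_of_mul_eq_mul_transpose hA, transpose_mul, Matrix.mul_assoc]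

theorem selfAdjoint_blocks_and_top_row_eq_iff (hp : IsUnit p) {G : Matrix s t R} {H : Matrix t s R}
    (hGH : G * diagonal q = diagonal p * Hᵀ)
    (W : Matrix s s R) (X : Matrix s t R) (Y : Matrix t s R) (Z : Matrix t t R) :
    ((W * diagonal p = diagonal p * Wᵀ ∧ X * diagonal q = diagonal p * Yᵀ ∧
        Y * diagonal p = diagonal q * Xᵀ ∧ Z * diagonal q = diagonal q * Zᵀ) ∧
      W = -(G * Y) ∧ X = -(G * Z)) ↔
    Z * diagonal q = diagonal q * Zᵀ ∧ W = G * Z * H ∧ X = -(G * Z) ∧ Y = -(Z * H) := by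
  have hHG : H * diagonal p = diagonal q * Gᵀ := by
    simpa only [transpose_mul, transpose_transpose, diagonal_transpose] using
      (congrArg transpose hGH).symm
  constructor
  · rintro ⟨⟨-, -, hY, hZ⟩, rfl, rfl⟩
    have hP : diagonal p * (diagonal p)⁻¹ = 1 :=
      mul_nonsing_inv _ ((isUnit_iff_isUnit_det _).mp (isUnit_diagonal.mpr hp))
    have hY' : Y = -(Z * H) := by
      refine mul_left_injective_of_inv _ _ hP ?_
      calc Y * diagonal p = -(diagonal q * Zᵀ * Gᵀ) := by
            rw [hY, transpose_neg, transpose_mul, Matrix.mul_neg, Matrix.mul_assoc]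
        _ = -(Z * H) * diagonal p := by
            rw [← hZ, Matrix.neg_mul, Matrix.mul_assoc, Matrix.mul_assoc, hHG]
    subst hY'
    exact ⟨hZ, by rw [Matrix.mul_neg, neg_neg, Matrix.mul_assoc], rfl, rfl⟩
  · rintro ⟨hZ, rfl, rfl, rfl⟩
    refine ⟨⟨?_, ?_, ?_, hZ⟩, by rw [Matrix.mul_neg, neg_neg, Matrix.mul_assoc], rfl⟩
    · calc G * Z * H * diagonal p = G * (Z * diagonal q) * Gᵀ := by
            simp only [Matrix.mul_assoc, hHG]
        _ = G * diagonal q * (Zᵀ * Gᵀ) := by rw [hZ]; simp only [Matrix.mul_assoc]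
        _ = diagonal p * (G * Z * H)ᵀ := by
            rw [hGH]; simp only [transpose_mul, Matrix.mul_assoc]
    · calc -(G * Z) * diagonal q = -(G * diagonal q * Zᵀ) := by
            rw [Matrix.neg_mul, Matrix.mul_assoc, hZ, Matrix.mul_assoc]
        _ = diagonal p * (-(Z * H))ᵀ := by
            rw [hGH, transpose_neg, transpose_mul, Matrix.mul_neg, Matrix.mul_assoc]
    · calc -(Z * H) * diagonal p = -(Z * diagonal q * Gᵀ) := by
            rw [Matrix.neg_mul, Matrix.mul_assoc, hHG, Matrix.mul_assoc]
        _ = diagonal q * (-(G * Z))ᵀ := by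
            rw [hZ, transpose_neg, transpose_mul, Matrix.mul_neg, Matrix.mul_assoc]

end Weighted

end Matrix

theorem rcmc_stmt7_general (n : ℕ) (K : Matrix (Fin n) (Fin n) ℝ) (π : Fin n → ℝ)
    (hπpos : ∀ i, 0 < π i)
    (hdb : K * Matrix.diagonal π = Matrix.diagonal π * Kᵀ)
    (S : Finset (Fin n))
    (hinv : IsUnit (K.submatrix ((↑) : ↥S → Fin n) ((↑) : ↥S → Fin n)).det)
    (V : Matrix (Fin n) (Fin n) ℝ) :
    let KSS := K.submatrix ((↑) : ↥S → Fin n) ((↑) : ↥S → Fin n)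
    let KST := K.submatrix ((↑) : ↥S → Fin n) ((↑) : ↥(Sᶜ) → Fin n)
    let KTS := K.submatrix ((↑) : ↥(Sᶜ) → Fin n) ((↑) : ↥S → Fin n)
    let VTT := V.submatrix ((↑) : ↥(Sᶜ) → Fin n) ((↑) : ↥(Sᶜ) → Fin n)
    ((V * Matrix.diagonal π = Matrix.diagonal π * Vᵀ) ∧
      (∀ p : Fin n → ℝ, ∀ i : ↥S, (K.mulVec (V.mulVec p)) ↑i = 0))
    ↔
    ((VTT * Matrix.diagonal (fun i : ↥(Sᶜ) => π ↑i)
        = Matrix.diagonal (fun i : ↥(Sᶜ) => π ↑i) * VTTᵀ) ∧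
      V.submatrix ((↑) : ↥S → Fin n) ((↑) : ↥S → Fin n)
        = KSS⁻¹ * KST * VTT * KTS * KSS⁻¹ ∧
      V.submatrix ((↑) : ↥S → Fin n) ((↑) : ↥(Sᶜ) → Fin n)
        = -(KSS⁻¹ * KST * VTT) ∧
      V.submatrix ((↑) : ↥(Sᶜ) → Fin n) ((↑) : ↥S → Fin n)
        = -(VTT * KTS * KSS⁻¹)) := by
  intro KSS KST KTS VTT
  have hπS : IsUnit (fun i : S => π i) := Pi.isUnit_iff.mpr fun i => (hπpos i).ne'.isUnit
  obtain ⟨hdbSS, hdbST, -, -⟩ :=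
    (mul_diagonal_eq_diagonal_mul_transpose_iff_submatrix_compl S K π).mp hdb
  rw [mul_diagonal_eq_diagonal_mul_transpose_iff_submatrix_compl S,
    forall_mulVec_mulVec_apply_eq_zero_iff_submatrix_compl S, mul_add_mul_eq_zero_iff hinv,
    mul_add_mul_eq_zero_iff hinv]
  simpa only [Matrix.mul_assoc] using
    selfAdjoint_blocks_and_top_row_eq_iff hπS (nonsing_inv_mul_mul_diagonal hdbSS hdbST) _ _ _ _

/-- `V` is `π`-self-adjoint and has image contained in the QSSA subspace
`W = {y : K_SS y_S + K_ST y_T = 0} = {y : (K y)_S = 0}` if and only if `V` has the block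
form `V_SS = K_SS⁻¹ K_ST V_TT K_TS K_SS⁻¹`, `V_ST = −K_SS⁻¹ K_ST V_TT`,
`V_TS = −V_TT K_TS K_SS⁻¹` with a `π_T`-self-adjoint block `V_TT`. -/
theorem rcmc_stmt7 (n : ℕ) (K : Matrix (Fin n) (Fin n) ℝ) (π : Fin n → ℝ)
    (hoff : ∀ i j, i ≠ j → 0 ≤ K i j)
    (hcol : ∀ j, ∑ i, K i j = 0)
    (hπpos : ∀ i, 0 < π i) (hπsum : ∑ i, π i = 1)
    (hdb : K * Matrix.diagonal π = Matrix.diagonal π * Kᵀ)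
    (S : Finset (Fin n))
    (hinv : IsUnit (K.submatrix ((↑) : ↥S → Fin n) ((↑) : ↥S → Fin n)).det)
    (V : Matrix (Fin n) (Fin n) ℝ) :
    let KSS := K.submatrix ((↑) : ↥S → Fin n) ((↑) : ↥S → Fin n)
    let KST := K.submatrix ((↑) : ↥S → Fin n) ((↑) : ↥(Sᶜ) → Fin n)
    let KTS := K.submatrix ((↑) : ↥(Sᶜ) → Fin n) ((↑) : ↥S → Fin n)
    let VTT := V.submatrix ((↑) : ↥(Sᶜ) → Fin n) ((↑) : ↥(Sᶜ) → Fin n)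
    ((V * Matrix.diagonal π = Matrix.diagonal π * Vᵀ) ∧
      (∀ p : Fin n → ℝ, ∀ i : ↥S, (K.mulVec (V.mulVec p)) ↑i = 0))
    ↔
    ((VTT * Matrix.diagonal (fun i : ↥(Sᶜ) => π ↑i)
        = Matrix.diagonal (fun i : ↥(Sᶜ) => π ↑i) * VTTᵀ) ∧
      V.submatrix ((↑) : ↥S → Fin n) ((↑) : ↥S → Fin n)
        = KSS⁻¹ * KST * VTT * KTS * KSS⁻¹ ∧
      V.submatrix ((↑) : ↥S → Fin n) ((↑) : ↥(Sᶜ) → Fin n)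
        = -(KSS⁻¹ * KST * VTT) ∧
      V.submatrix ((↑) : ↥(Sᶜ) → Fin n) ((↑) : ↥S → Fin n)
        = -(VTT * KTS * KSS⁻¹)) :=
  rcmc_stmt7_general n K π hπpos hdb S hinv V
end

section
/- Let V be in the block form determined by V_{TT} (Proposition-form from QSSA, V = Ω* V_{TT} Ω with Ω = (−K_{TS}K_{SS}⁻¹, I_T)). Then V satisfies 1ᵀV = 1ᵀ if and only if 1_Tᵀ M V_{TT} = 1_Tᵀ, where M = I_T + K_{TS}K_{SS}⁻²K_{ST}. Moreover V ≥ 0 entrywise if and only if V_{TT} ≥ 0 entrywise. -/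
/-!
Zero column sums of `K` give `1ᵀ K_SS = -1ᵀ K_TS`, i.e. `1_Sᵀ = -1_Tᵀ K_TS K_SS⁻¹`. Hence the
`T`-columns of `1ᵀ V` are `1_Tᵀ M V_TT`, and its `S`-columns are `-(1_Tᵀ M V_TT) K_TS K_SS⁻¹`,
which is `1_Sᵀ` as soon as `1_Tᵀ M V_TT = 1_Tᵀ`.

For the sign, `K_SS` is a Metzler matrix with nonpositive column sums, so `K_SS⁻¹ ≤ 0`; since
`K_ST, K_TS ≥ 0`, every block of `V` is then a product of nonnegative matrices once the minus signs
are absorbed into `-K_SS⁻¹`.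
-/

namespace Matrix

theorem mul_entrywise_nonneg {l m n R : Type*} [Fintype m] [Semiring R] [PartialOrder R]
    [IsOrderedRing R] {X : Matrix l m R} {Y : Matrix m n R} (hX : ∀ i j, 0 ≤ X i j)
    (hY : ∀ i j, 0 ≤ Y i j) (i : l) (j : n) : 0 ≤ (X * Y) i j :=
  Finset.sum_nonneg fun k _ => mul_nonneg (hX i k) (hY k j)

theorem one_vecMul_apply {ι κ R : Type*} [Fintype ι] [NonAssocSemiring R] (X : Matrix ι κ R)
    (j : κ) : (1 ᵥ* X) j = ∑ i, X i j :=
  one_dotProduct _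

theorem one_vecMul_eq_one_iff {ι κ R : Type*} [Fintype ι] [NonAssocSemiring R]
    (X : Matrix ι κ R) : 1 ᵥ* X = 1 ↔ ∀ j, ∑ i, X i j = 1 := by
  simp only [funext_iff, one_vecMul_apply, Pi.one_apply]

section Partition

variable {ι R : Type*} [Fintype ι] [DecidableEq ι] (S : Finset ι)

theorem forall_iff_forall_coe_and_forall_compl {p : ι → Prop} :
    (∀ i, p i) ↔ (∀ i : S, p i) ∧ ∀ i : ↥Sᶜ, p i :=
  ⟨fun h => ⟨fun i => h i, fun i => h i⟩, fun ⟨hS, hT⟩ i =>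
    if hi : i ∈ S then hS ⟨i, hi⟩ else hT ⟨i, Finset.mem_compl.mpr hi⟩⟩

theorem forall_apply_iff_forall_blocks (V : Matrix ι ι R) (p : R → Prop) :
    (∀ i j, p (V i j)) ↔
      (∀ i j, p (V.submatrix ((↑) : S → ι) ((↑) : S → ι) i j)) ∧
      (∀ i j, p (V.submatrix ((↑) : S → ι) ((↑) : ↥Sᶜ → ι) i j)) ∧
      (∀ i j, p (V.submatrix ((↑) : ↥Sᶜ → ι) ((↑) : S → ι) i j)) ∧
      (∀ i j, p (V.submatrix ((↑) : ↥Sᶜ → ι) ((↑) : ↥Sᶜ → ι) i j)) := by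
  simp only [forall_iff_forall_coe_and_forall_compl S, submatrix_apply, forall_and, and_assoc]
  exact ⟨fun ⟨hSS, hTS, hST, hTT⟩ => ⟨hSS, hST, hTS, hTT⟩,
    fun ⟨hSS, hST, hTS, hTT⟩ => ⟨hSS, hTS, hST, hTT⟩⟩

section Semiring

variable [NonAssocSemiring R]

theorem one_vecMul_submatrix_coe_add_compl {κ α : Type*} (K : Matrix ι κ R) (f : α → κ) :
    1 ᵥ* K.submatrix ((↑) : S → ι) f + 1 ᵥ* K.submatrix ((↑) : ↥Sᶜ → ι) f =
      fun j => (1 ᵥ* K) (f j) := by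
  funext j
  simp only [Pi.add_apply, one_vecMul_apply, submatrix_apply]
  rw [Finset.sum_coe_sort S fun i => K i (f j), Finset.sum_coe_sort Sᶜ fun i => K i (f j),
    Finset.sum_add_sum_compl]

theorem one_vecMul_eq_one_iff_blocks (V : Matrix ι ι R) :
    1 ᵥ* V = 1 ↔
      1 ᵥ* V.submatrix ((↑) : S → ι) ((↑) : S → ι) +
          1 ᵥ* V.submatrix ((↑) : ↥Sᶜ → ι) ((↑) : S → ι) = 1 ∧
        1 ᵥ* V.submatrix ((↑) : S → ι) ((↑) : ↥Sᶜ → ι) +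
          1 ᵥ* V.submatrix ((↑) : ↥Sᶜ → ι) ((↑) : ↥Sᶜ → ι) = 1 := by
  rw [one_vecMul_submatrix_coe_add_compl, one_vecMul_submatrix_coe_add_compl, funext_iff,
    funext_iff, funext_iff, forall_iff_forall_coe_and_forall_compl S]
  rfl

end Semiring

theorem one_vecMul_submatrix_coe_eq_neg {κ α : Type*} [Ring R] (K : Matrix ι κ R)
    (hcol : ∀ j, ∑ i, K i j = 0) (f : α → κ) :
    1 ᵥ* K.submatrix ((↑) : S → ι) f = -(1 ᵥ* K.submatrix ((↑) : ↥Sᶜ → ι) f) := by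
  refine eq_neg_of_add_eq_zero_left ?_
  rw [one_vecMul_submatrix_coe_add_compl]
  exact funext fun j => (one_vecMul_apply K _).trans (hcol _)

end Partition

section Metzler

variable {m 𝕜 : Type*}

def IsMetzler [Zero 𝕜] [LE 𝕜] (A : Matrix m m 𝕜) : Prop :=
  ∀ i j, i ≠ j → 0 ≤ A i j

theorem IsMetzler.submatrix {n : Type*} [Zero 𝕜] [LE 𝕜] {A : Matrix m m 𝕜} (hA : A.IsMetzler)
    {e : n → m} (he : Function.Injective e) : (A.submatrix e e).IsMetzler :=
  fun i j hij => hA (e i) (e j) (he.ne hij)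

section LinearOrderedField

variable [Fintype m] [Field 𝕜] [LinearOrder 𝕜] [IsStrictOrderedRing 𝕜] {A : Matrix m m 𝕜}

/-- Maximum principle: evaluate `y ᵥ* A` at a maximiser of `y`. -/
theorem IsMetzler.nonpos_of_nonneg_vecMul (hA : A.IsMetzler) (hcol : ∀ j, ∑ i, A i j < 0)
    {y : m → 𝕜} (hy : 0 ≤ y ᵥ* A) : y ≤ 0 := by
  by_contra hpos
  obtain ⟨i₀, hi₀⟩ : ∃ i, 0 < y i := by simpa [Pi.le_def] using hpos
  obtain ⟨k, -, hk⟩ := Finset.univ.exists_max_image y ⟨i₀, Finset.mem_univ i₀⟩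
  have hyk : 0 < y k := hi₀.trans_le (hk i₀ (Finset.mem_univ i₀))
  have hle : (y ᵥ* A) k ≤ y k * ∑ i, A i k := by
    rw [Finset.mul_sum]
    refine Finset.sum_le_sum fun i _ => ?_
    rcases eq_or_ne i k with rfl | hik
    · exact le_rfl
    · exact mul_le_mul_of_nonneg_right (hk i (Finset.mem_univ i)) (hA i k hik)
  exact (hy k).not_gt (hle.trans_lt (mul_neg_of_pos_of_neg hyk (hcol k)))

theorem IsMetzler.isUnit_det_of_colSum_neg [DecidableEq m] (hA : A.IsMetzler)
    (hcol : ∀ j, ∑ i, A i j < 0) : IsUnit A.det := by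
  rw [isUnit_iff_ne_zero]
  intro hdet
  obtain ⟨v, hv0, hv⟩ := exists_vecMul_eq_zero_iff.mpr hdet
  have hle : v ≤ 0 := hA.nonpos_of_nonneg_vecMul hcol hv.ge
  have hge : -v ≤ 0 := hA.nonpos_of_nonneg_vecMul hcol (by rw [neg_vecMul, hv, neg_zero])
  exact hv0 (le_antisymm hle (neg_nonpos.mp hge))

theorem IsMetzler.inv_nonpos_of_colSum_neg [DecidableEq m] (hA : A.IsMetzler)
    (hcol : ∀ j, ∑ i, A i j < 0) (i j : m) : A⁻¹ i j ≤ 0 := by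
  have hrow : A⁻¹ i ᵥ* A = Pi.single i 1 := by
    rw [← mul_apply_eq_vecMul, nonsing_inv_mul A (hA.isUnit_det_of_colSum_neg hcol)]
    exact funext fun j => by simp [one_apply, Pi.single_apply, eq_comm]
  exact hA.nonpos_of_nonneg_vecMul hcol (hrow ▸ Pi.single_nonneg.mpr zero_le_one) j

end LinearOrderedField

theorem IsMetzler.sub_smul_one [DecidableEq m] [Ring 𝕜] [PartialOrder 𝕜] {A : Matrix m m 𝕜}
    (hA : A.IsMetzler) (ε : 𝕜) : (A - ε • 1).IsMetzler := fun i j hij => by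
  simpa [one_apply_ne hij] using hA i j hij

/-- Perturb to `A - ε • 1`, whose column sums are negative, and let `ε → 0⁺`. -/
theorem IsMetzler.inv_nonpos_of_colSum_nonpos [Fintype m] [DecidableEq m] {A : Matrix m m ℝ}
    (hA : A.IsMetzler) (hcol : ∀ j, ∑ i, A i j ≤ 0) (hdet : IsUnit A.det) (i j : m) :
    A⁻¹ i j ≤ 0 := by
  have hinv : ContinuousAt Inv.inv A :=
    continuousAt_matrix_inv A (by rw [Ring.inverse_eq_inv']; exact continuousAt_inv₀ hdet.ne_zero)
  have hpert : Filter.Tendsto (fun ε : ℝ => A - ε • 1) (nhdsWithin 0 (Set.Ioi 0)) (nhds A) := by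
    have hcont : Continuous fun ε : ℝ => A - ε • (1 : Matrix m m ℝ) := by fun_prop
    simpa using tendsto_nhdsWithin_of_tendsto_nhds (hcont.tendsto 0)
  have hlim : Filter.Tendsto (fun ε : ℝ => (A - ε • 1)⁻¹ i j) (nhdsWithin 0 (Set.Ioi 0))
      (nhds (A⁻¹ i j)) :=
    ((continuous_id.matrix_elem i j).tendsto _).comp (hinv.tendsto.comp hpert)
  refine le_of_tendsto hlim (eventually_nhdsWithin_of_forall fun ε (hε : 0 < ε) => ?_)
  refine (hA.sub_smul_one ε).inv_nonpos_of_colSum_neg (fun k => ?_) i j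
  simpa [Finset.sum_sub_distrib, one_apply] using (hcol k).trans_lt hε

section Partition

variable [Fintype m] [DecidableEq m] {A : Matrix m m ℝ} (S : Finset m)

theorem IsMetzler.submatrix_coe_compl_nonneg (hA : A.IsMetzler) (i : S) (j : ↥Sᶜ) :
    0 ≤ A.submatrix ((↑) : S → m) ((↑) : ↥Sᶜ → m) i j :=
  hA _ _ fun h => Finset.mem_compl.mp j.2 (h ▸ i.2)

theorem IsMetzler.submatrix_compl_coe_nonneg (hA : A.IsMetzler) (i : ↥Sᶜ) (j : S) :
    0 ≤ A.submatrix ((↑) : ↥Sᶜ → m) ((↑) : S → m) i j :=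
  hA _ _ fun h => Finset.mem_compl.mp i.2 (h ▸ j.2)

theorem IsMetzler.inv_submatrix_nonpos (hA : A.IsMetzler) (hcol : ∀ j, ∑ i, A i j ≤ 0)
    (hdet : IsUnit (A.submatrix ((↑) : S → m) ((↑) : S → m)).det) (i j : S) :
    (A.submatrix ((↑) : S → m) ((↑) : S → m))⁻¹ i j ≤ 0 := by
  refine (hA.submatrix Subtype.val_injective).inv_nonpos_of_colSum_nonpos (fun k => ?_) hdet i j
  have hsplit := congrFun (one_vecMul_submatrix_coe_add_compl S A ((↑) : S → m)) k
  simp only [Pi.add_apply, one_vecMul_apply, submatrix_apply] at hsplit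
  have hcompl : 0 ≤ ∑ i : ↥Sᶜ, A i k :=
    Finset.sum_nonneg fun i _ => hA.submatrix_compl_coe_nonneg S i k
  show ∑ i : S, A i k ≤ 0
  linarith [hcol k]

end Partition

end Metzler

section Blocks

variable {σ τ R : Type*} [Fintype σ] [Fintype τ] [DecidableEq σ] [CommRing R]
  {A : Matrix σ σ R} {B : Matrix σ τ R} {C : Matrix τ σ R}

theorem one_eq_neg_one_vecMul_mul_inv (hA : IsUnit A.det) (hAC : 1 ᵥ* A = -(1 ᵥ* C)) :
    (1 : σ → R) = -(1 ᵥ* (C * A⁻¹)) := by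
  rw [← vecMul_vecMul, ← neg_vecMul, ← hAC, vecMul_vecMul, mul_nonsing_inv A hA, vecMul_one]

theorem one_vecMul_blocks_eq_one_iff [DecidableEq τ] (hA : IsUnit A.det) (hAC : 1 ᵥ* A = -(1 ᵥ* C))
    (W : Matrix τ τ R) :
    (1 ᵥ* (A⁻¹ * B * W * C * A⁻¹) + 1 ᵥ* (-(W * C * A⁻¹)) = 1 ∧
        1 ᵥ* (-(A⁻¹ * B * W)) + 1 ᵥ* W = 1) ↔
      1 ᵥ* ((1 + C * A⁻¹ * A⁻¹ * B) * W) = 1 := by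
  have h1 := one_eq_neg_one_vecMul_mul_inv hA hAC
  set u := 1 ᵥ* ((1 + C * A⁻¹ * A⁻¹ * B) * W)
  have hT : 1 ᵥ* (-(A⁻¹ * B * W)) + 1 ᵥ* W = u := by
    rw [h1]
    simp only [u, vecMul_neg, neg_vecMul, neg_neg, vecMul_vecMul, ← vecMul_add]
    congr 1
    simp only [Matrix.add_mul, Matrix.one_mul, Matrix.mul_assoc, add_comm]
  have hS : 1 ᵥ* (A⁻¹ * B * W * C * A⁻¹) + 1 ᵥ* (-(W * C * A⁻¹)) = -(u ᵥ* (C * A⁻¹)) := by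
    rw [h1]
    simp only [u, vecMul_neg, neg_vecMul, vecMul_vecMul, ← neg_add, ← vecMul_add]
    congr 2
    simp only [Matrix.add_mul, Matrix.one_mul, Matrix.mul_assoc, add_comm]
  rw [hT, hS]
  refine ⟨And.right, fun hu => ⟨?_, hu⟩⟩
  rw [hu]
  exact h1.symm

end Blocks

end Matrix

open Matrix

theorem rcmc_stmt8_general (n : ℕ) (K : Matrix (Fin n) (Fin n) ℝ)
    (hoff : ∀ i j, i ≠ j → 0 ≤ K i j)
    (hcol : ∀ j, ∑ i, K i j = 0)
    (S : Finset (Fin n))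
    (hinv : IsUnit (K.submatrix ((↑) : ↥S → Fin n) ((↑) : ↥S → Fin n)).det)
    (V : Matrix (Fin n) (Fin n) ℝ)
    (VTT : Matrix ↥(Sᶜ) ↥(Sᶜ) ℝ)
    (hTT : V.submatrix ((↑) : ↥(Sᶜ) → Fin n) ((↑) : ↥(Sᶜ) → Fin n) = VTT)
    (hSS : V.submatrix ((↑) : ↥S → Fin n) ((↑) : ↥S → Fin n)
      = (K.submatrix ((↑) : ↥S → Fin n) ((↑) : ↥S → Fin n))⁻¹
        * K.submatrix ((↑) : ↥S → Fin n) ((↑) : ↥(Sᶜ) → Fin n) * VTT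
        * K.submatrix ((↑) : ↥(Sᶜ) → Fin n) ((↑) : ↥S → Fin n)
        * (K.submatrix ((↑) : ↥S → Fin n) ((↑) : ↥S → Fin n))⁻¹)
    (hST : V.submatrix ((↑) : ↥S → Fin n) ((↑) : ↥(Sᶜ) → Fin n)
      = -((K.submatrix ((↑) : ↥S → Fin n) ((↑) : ↥S → Fin n))⁻¹
          * K.submatrix ((↑) : ↥S → Fin n) ((↑) : ↥(Sᶜ) → Fin n) * VTT))
    (hTS : V.submatrix ((↑) : ↥(Sᶜ) → Fin n) ((↑) : ↥S → Fin n)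
      = -(VTT * K.submatrix ((↑) : ↥(Sᶜ) → Fin n) ((↑) : ↥S → Fin n)
          * (K.submatrix ((↑) : ↥S → Fin n) ((↑) : ↥S → Fin n))⁻¹)) :
    let M : Matrix ↥(Sᶜ) ↥(Sᶜ) ℝ :=
      1 + K.submatrix ((↑) : ↥(Sᶜ) → Fin n) ((↑) : ↥S → Fin n)
        * (K.submatrix ((↑) : ↥S → Fin n) ((↑) : ↥S → Fin n))⁻¹
        * (K.submatrix ((↑) : ↥S → Fin n) ((↑) : ↥S → Fin n))⁻¹
        * K.submatrix ((↑) : ↥S → Fin n) ((↑) : ↥(Sᶜ) → Fin n)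
    ((∀ j : Fin n, ∑ i, V i j = 1) ↔ (∀ j : ↥(Sᶜ), ∑ i : ↥(Sᶜ), (M * VTT) i j = 1)) ∧
    ((∀ i j : Fin n, 0 ≤ V i j) ↔ (∀ i j : ↥(Sᶜ), 0 ≤ VTT i j)) := by
  intro M
  set A := K.submatrix ((↑) : ↥S → Fin n) ((↑) : ↥S → Fin n)
  set B := K.submatrix ((↑) : ↥S → Fin n) ((↑) : ↥(Sᶜ) → Fin n)
  set C := K.submatrix ((↑) : ↥(Sᶜ) → Fin n) ((↑) : ↥S → Fin n)
  have hK : K.IsMetzler := hoff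
  have hAC : 1 ᵥ* A = -(1 ᵥ* C) := one_vecMul_submatrix_coe_eq_neg S K hcol _
  have hN : ∀ i j, 0 ≤ (-A⁻¹) i j := fun i j =>
    neg_nonneg.mpr (hK.inv_submatrix_nonpos S (fun j => (hcol j).le) hinv i j)
  have hB : ∀ i j, 0 ≤ B i j := hK.submatrix_coe_compl_nonneg S
  have hC : ∀ i j, 0 ≤ C i j := hK.submatrix_compl_coe_nonneg S
  refine ⟨?_, ⟨fun hV i j => hTT ▸ hV _ _, fun hW => ?_⟩⟩
  · rw [← one_vecMul_eq_one_iff, ← one_vecMul_eq_one_iff, one_vecMul_eq_one_iff_blocks S, hSS,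
      hST, hTS, hTT]
    exact one_vecMul_blocks_eq_one_iff hinv hAC VTT
  · refine (forall_apply_iff_forall_blocks S V (0 ≤ ·)).mpr ⟨?_, ?_, ?_, hTT ▸ hW⟩
    · rw [hSS, show A⁻¹ * B * VTT * C * A⁻¹ = -A⁻¹ * B * VTT * C * -A⁻¹ by
        simp only [Matrix.neg_mul, Matrix.mul_neg, neg_neg]]
      exact mul_entrywise_nonneg (mul_entrywise_nonneg
        (mul_entrywise_nonneg (mul_entrywise_nonneg hN hB) hW) hC) hN
    · rw [hST, show -(A⁻¹ * B * VTT) = -A⁻¹ * B * VTT by simp only [Matrix.neg_mul]]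
      exact mul_entrywise_nonneg (mul_entrywise_nonneg hN hB) hW
    · rw [hTS, show -(VTT * C * A⁻¹) = VTT * C * -A⁻¹ by simp only [Matrix.mul_neg]]
      exact mul_entrywise_nonneg (mul_entrywise_nonneg hW hC) hN

/-- For `V` in the block form determined by `V_TT`, `1ᵀ V = 1ᵀ` holds iff
`1_Tᵀ M V_TT = 1_Tᵀ` where `M = I_T + K_TS K_SS⁻² K_ST`; moreover `V ≥ 0` entrywise iff
`V_TT ≥ 0` entrywise. -/
theorem rcmc_stmt8 (n : ℕ) (K : Matrix (Fin n) (Fin n) ℝ) (π : Fin n → ℝ)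
    (hoff : ∀ i j, i ≠ j → 0 ≤ K i j)
    (hcol : ∀ j, ∑ i, K i j = 0)
    (hπpos : ∀ i, 0 < π i) (hπsum : ∑ i, π i = 1)
    (hdb : K * Matrix.diagonal π = Matrix.diagonal π * Kᵀ)
    (S : Finset (Fin n))
    (hinv : IsUnit (K.submatrix ((↑) : ↥S → Fin n) ((↑) : ↥S → Fin n)).det)
    (V : Matrix (Fin n) (Fin n) ℝ)
    (VTT : Matrix ↥(Sᶜ) ↥(Sᶜ) ℝ)
    (hTT : V.submatrix ((↑) : ↥(Sᶜ) → Fin n) ((↑) : ↥(Sᶜ) → Fin n) = VTT)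
    (hSS : V.submatrix ((↑) : ↥S → Fin n) ((↑) : ↥S → Fin n)
      = (K.submatrix ((↑) : ↥S → Fin n) ((↑) : ↥S → Fin n))⁻¹
        * K.submatrix ((↑) : ↥S → Fin n) ((↑) : ↥(Sᶜ) → Fin n) * VTT
        * K.submatrix ((↑) : ↥(Sᶜ) → Fin n) ((↑) : ↥S → Fin n)
        * (K.submatrix ((↑) : ↥S → Fin n) ((↑) : ↥S → Fin n))⁻¹)
    (hST : V.submatrix ((↑) : ↥S → Fin n) ((↑) : ↥(Sᶜ) → Fin n)
      = -((K.submatrix ((↑) : ↥S → Fin n) ((↑) : ↥S → Fin n))⁻¹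
          * K.submatrix ((↑) : ↥S → Fin n) ((↑) : ↥(Sᶜ) → Fin n) * VTT))
    (hTS : V.submatrix ((↑) : ↥(Sᶜ) → Fin n) ((↑) : ↥S → Fin n)
      = -(VTT * K.submatrix ((↑) : ↥(Sᶜ) → Fin n) ((↑) : ↥S → Fin n)
          * (K.submatrix ((↑) : ↥S → Fin n) ((↑) : ↥S → Fin n))⁻¹)) :
    let M : Matrix ↥(Sᶜ) ↥(Sᶜ) ℝ :=
      1 + K.submatrix ((↑) : ↥(Sᶜ) → Fin n) ((↑) : ↥S → Fin n)
        * (K.submatrix ((↑) : ↥S → Fin n) ((↑) : ↥S → Fin n))⁻¹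
        * (K.submatrix ((↑) : ↥S → Fin n) ((↑) : ↥S → Fin n))⁻¹
        * K.submatrix ((↑) : ↥S → Fin n) ((↑) : ↥(Sᶜ) → Fin n)
    ((∀ j : Fin n, ∑ i, V i j = 1) ↔ (∀ j : ↥(Sᶜ), ∑ i : ↥(Sᶜ), (M * VTT) i j = 1)) ∧
    ((∀ i j : Fin n, 0 ≤ V i j) ↔ (∀ i j : ↥(Sᶜ), 0 ≤ VTT i j)) :=
  rcmc_stmt8_general n K hoff hcol S hinv V VTT hTT hSS hST hTS
end

section
/- With V_{TT} = diag(1_TᵀM)⁻¹ where M = I_T + K_{TS}K_{SS}⁻²K_{ST} (Type A), the resulting matrix V maps the probability simplex into itself: Vp ∈ Δ_n for every p ∈ Δ_n. -/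
open Matrix BigOperators

/-!
Write `P = -K_SS⁻¹ K_ST` and `Q = -K_TS K_SS⁻¹`. Since `K` has nonnegative off-diagonal entries and
zero column sums, `-K_SS` is a Z-matrix with nonnegative column sums, so its inverse is entrywise
nonnegative (a minimum principle for strictly positive column sums, then `ε → 0` in `-K_SS + ε I`
by continuity of the inverse). Hence `P, Q ≥ 0`, and `V = (P; I) V_TT (Q, I)` is a product of
nonnegative matrices. Zero column sums of `K` give `1ᵀ Q = 1ᵀ`, so `1ᵀ M = 1ᵀ + 1ᵀ P` is the vector
of column sums of `(P; I)`; dividing by it in `V_TT` makes every column of `V` sum to one.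
-/

/-- Assemble an `n × n` matrix from four blocks indexed by a set `S` and its complement. -/
def rcmcAssemble {n : ℕ} (S : Finset (Fin n))
    (ASS : Matrix ↥S ↥S ℝ) (AST : Matrix ↥S ↥(Sᶜ) ℝ)
    (ATS : Matrix ↥(Sᶜ) ↥S ℝ) (ATT : Matrix ↥(Sᶜ) ↥(Sᶜ) ℝ) :
    Matrix (Fin n) (Fin n) ℝ := fun i j =>
  if hi : i ∈ S then
    if hj : j ∈ S then ASS ⟨i, hi⟩ ⟨j, hj⟩
    else AST ⟨i, hi⟩ ⟨j, Finset.mem_compl.mpr hj⟩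
  else
    if hj : j ∈ S then ATS ⟨i, Finset.mem_compl.mpr hi⟩ ⟨j, hj⟩
    else ATT ⟨i, Finset.mem_compl.mpr hi⟩ ⟨j, Finset.mem_compl.mpr hj⟩

namespace Matrix

variable {m : Type*} [Fintype m] {A : Matrix m m ℝ}

theorem nonneg_of_nonneg_vecMul_of_colSum_pos (hoff : ∀ i j, i ≠ j → A i j ≤ 0)
    (hcol : ∀ j, 0 < ∑ i, A i j) {y : m → ℝ} (hy : ∀ j, 0 ≤ (y ᵥ* A) j) (i : m) :
    0 ≤ y i := by
  have : Nonempty m := ⟨i⟩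
  obtain ⟨k, hk⟩ := Finite.exists_min y
  by_contra! hneg
  have hterm : ∀ j, y j * A j k ≤ y k * A j k := fun j => by
    rcases eq_or_ne j k with rfl | hjk
    · rfl
    · exact mul_le_mul_of_nonpos_right (hk j) (hoff j k hjk)
  have : (y ᵥ* A) k < 0 := calc
    (y ᵥ* A) k = ∑ j, y j * A j k := rfl
    _ ≤ ∑ j, y k * A j k := Finset.sum_le_sum fun j _ => hterm j
    _ = y k * ∑ j, A j k := (Finset.mul_sum ..).symm
    _ < 0 := mul_neg_of_neg_of_pos ((hk i).trans_lt hneg) (hcol k)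
  exact (hy k).not_gt this

variable [DecidableEq m]

theorem inv_nonneg_of_colSum_pos (hoff : ∀ i j, i ≠ j → A i j ≤ 0)
    (hcol : ∀ j, 0 < ∑ i, A i j) (i j : m) : 0 ≤ A⁻¹ i j := by
  have hA : IsUnit A := by
    refine vecMul_injective_iff_isUnit.1 fun y z (hyz : y ᵥ* A = z ᵥ* A) => funext fun i => ?_
    have h₁ := nonneg_of_nonneg_vecMul_of_colSum_pos hoff hcol (y := y - z)
      (by simp [sub_vecMul, hyz]) i
    have h₂ := nonneg_of_nonneg_vecMul_of_colSum_pos hoff hcol (y := z - y)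
      (by simp [sub_vecMul, hyz]) i
    simp only [Pi.sub_apply] at h₁ h₂
    linarith
  have hrow : (Pi.single i 1 ᵥ* A⁻¹) ᵥ* A = Pi.single i 1 := by
    rw [vecMul_vecMul, nonsing_inv_mul _ ((isUnit_iff_isUnit_det A).1 hA), vecMul_one]
  have := nonneg_of_nonneg_vecMul_of_colSum_pos hoff hcol (y := Pi.single i 1 ᵥ* A⁻¹)
    (fun k => by rw [hrow, Pi.single_apply]; split_ifs <;> norm_num) j
  simpa using this

theorem inv_nonneg_of_colSum_nonneg (hoff : ∀ i j, i ≠ j → A i j ≤ 0)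
    (hcol : ∀ j, 0 ≤ ∑ i, A i j) (hA : IsUnit A.det) (i j : m) : 0 ≤ A⁻¹ i j := by
  have hcont : ContinuousAt (fun ε : ℝ => (A + ε • 1)⁻¹) 0 := by
    refine ContinuousAt.comp (f := fun ε : ℝ => A + ε • 1) ?_ (by fun_prop)
    rw [zero_smul, add_zero]
    refine continuousAt_matrix_inv A ?_
    rw [Ring.inverse_eq_inv']
    exact continuousAt_inv₀ hA.ne_zero
  have hlim : Filter.Tendsto (fun ε : ℝ => (A + ε • 1)⁻¹ i j) (nhdsWithin 0 (Set.Ioi 0))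
      (nhds (A⁻¹ i j)) := by
    simpa only [zero_smul, add_zero] using
      ((hcont.tendsto.apply_nhds i).apply_nhds j).mono_left nhdsWithin_le_nhds
  refine ge_of_tendsto hlim (eventually_nhdsWithin_of_forall fun ε (hε : 0 < ε) => ?_)
  refine inv_nonneg_of_colSum_pos (fun k l hkl => ?_) (fun l => ?_) i j
  · simpa [one_apply_ne hkl] using hoff k l hkl
  · simp only [add_apply, smul_apply, one_apply, smul_eq_mul, mul_ite, mul_one, mul_zero,
      Finset.sum_add_distrib, Finset.sum_ite_eq', Finset.mem_univ, if_true]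
    linarith [hcol l]

theorem inv_submatrix_nonpos {ι : Type*} [Fintype ι] [DecidableEq ι] {K : Matrix ι ι ℝ}
    (hoff : ∀ i j, i ≠ j → 0 ≤ K i j) (hcol : ∀ j, ∑ i, K i j ≤ 0) (S : Finset ι)
    (hS : IsUnit (K.submatrix ((↑) : S → ι) ((↑) : S → ι)).det) (i j : S) :
    (K.submatrix ((↑) : S → ι) ((↑) : S → ι))⁻¹ i j ≤ 0 := by
  set KSS := K.submatrix ((↑) : S → ι) ((↑) : S → ι)
  have hcolS : ∀ j : S, 0 ≤ ∑ i, (-KSS) i j := fun j => by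
    have hsplit := Finset.sum_add_sum_compl S fun i => K i j
    have hout : 0 ≤ ∑ i ∈ Sᶜ, K i j := Finset.sum_nonneg fun i hi =>
      hoff i j fun h => Finset.mem_compl.1 hi (h ▸ j.2)
    simp only [Matrix.neg_apply, Finset.sum_neg_distrib, KSS, submatrix_apply,
      Finset.sum_coe_sort S fun i => K i j]
    linarith [hcol j]
  have hnegS : IsUnit (-KSS).det := by
    rw [det_neg]
    exact (isUnit_one.neg.pow _).mul hS
  have h := inv_nonneg_of_colSum_nonneg (fun k l hkl => by
    simpa [KSS] using hoff k l (Subtype.coe_injective.ne hkl)) hcolS hnegS i j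
  rwa [inv_eq_left_inv (neg_mul_neg KSS⁻¹ KSS ▸ nonsing_inv_mul KSS hS), Matrix.neg_apply,
    neg_nonneg] at h

theorem mul_apply_nonneg {l n o : Type*} [Fintype n] {A : Matrix l n ℝ} {B : Matrix n o ℝ}
    (hA : ∀ i j, 0 ≤ A i j) (hB : ∀ i j, 0 ≤ B i j) (i : l) (k : o) : 0 ≤ (A * B) i k :=
  Finset.sum_nonneg fun j _ => mul_nonneg (hA i j) (hB j k)

theorem mul_inv_diagonal_mul_mem_colStochastic {ι κ : Type*} [Fintype ι] [DecidableEq ι]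
    [Fintype κ] [DecidableEq κ] {R : Matrix ι κ ℝ} {C : Matrix κ ι ℝ} (hR : ∀ i j, 0 ≤ R i j)
    (hC : ∀ i j, 0 ≤ C i j) (hRcol : ∀ j, 0 < (1 ᵥ* R) j) (hCcol : 1 ᵥ* C = 1) :
    R * (diagonal (1 ᵥ* R))⁻¹ * C ∈ colStochastic ℝ ι := by
  have hD : (diagonal (1 ᵥ* R))⁻¹ = diagonal fun j => ((1 ᵥ* R) j)⁻¹ := by
    refine inv_eq_right_inv ?_
    rw [diagonal_mul_diagonal, ← diagonal_one]
    exact congrArg diagonal (funext fun j => mul_inv_cancel₀ (hRcol j).ne')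
  refine ⟨mul_apply_nonneg (mul_apply_nonneg hR fun i j => ?_) hC, ?_⟩
  · rw [hD, diagonal_apply]
    split_ifs
    exacts [inv_nonneg.2 (hRcol i).le, le_rfl]
  · have hRD : (1 ᵥ* R) ᵥ* (diagonal (1 ᵥ* R))⁻¹ = 1 := by
      ext j
      rw [hD, vecMul_diagonal, Pi.one_apply, mul_inv_cancel₀ (hRcol j).ne']
    rw [← vecMul_vecMul, ← vecMul_vecMul, hRD, hCcol]

end Matrix

section ComplBlocks

variable {n : ℕ} (S : Finset (Fin n)) {κ : Type*}

def fromRowsCompl (A : Matrix S κ ℝ) (B : Matrix ↥Sᶜ κ ℝ) : Matrix (Fin n) κ ℝ := fun i =>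
  if hi : i ∈ S then A ⟨i, hi⟩ else B ⟨i, Finset.mem_compl.2 hi⟩

def fromColsCompl (A : Matrix κ S ℝ) (B : Matrix κ ↥Sᶜ ℝ) : Matrix κ (Fin n) ℝ := fun k j =>
  if hj : j ∈ S then A k ⟨j, hj⟩ else B k ⟨j, Finset.mem_compl.2 hj⟩

variable {S}

theorem fromRowsCompl_submatrix {ν : Type*} (K : Matrix (Fin n) ν ℝ) (c : κ → ν) :
    fromRowsCompl S (K.submatrix (↑) c) (K.submatrix (↑) c) = K.submatrix id c := by
  ext i j
  unfold fromRowsCompl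
  split_ifs <;> rfl

theorem fromRowsCompl_nonneg {A : Matrix S κ ℝ} {B : Matrix ↥Sᶜ κ ℝ} (hA : ∀ i j, 0 ≤ A i j)
    (hB : ∀ i j, 0 ≤ B i j) (i : Fin n) (j : κ) : 0 ≤ fromRowsCompl S A B i j := by
  unfold fromRowsCompl
  split_ifs <;> simp only [hA, hB]

theorem fromColsCompl_nonneg {A : Matrix κ S ℝ} {B : Matrix κ ↥Sᶜ ℝ} (hA : ∀ i j, 0 ≤ A i j)
    (hB : ∀ i j, 0 ≤ B i j) (i : κ) (j : Fin n) : 0 ≤ fromColsCompl S A B i j := by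
  unfold fromColsCompl
  split_ifs <;> simp only [hA, hB]

theorem one_vecMul_fromRowsCompl (A : Matrix S κ ℝ) (B : Matrix ↥Sᶜ κ ℝ) :
    1 ᵥ* fromRowsCompl S A B = 1 ᵥ* A + 1 ᵥ* B := by
  ext j
  simp only [vecMul, dotProduct, Pi.one_apply, one_mul, Pi.add_apply]
  rw [← Finset.sum_add_sum_compl S, ← Finset.sum_coe_sort S, ← Finset.sum_coe_sort Sᶜ]
  congr 1 <;> refine Finset.sum_congr rfl fun i _ => ?_
  · simp [fromRowsCompl, i.2]
  · simp [fromRowsCompl, Finset.mem_compl.1 i.2]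

variable [Fintype κ]

theorem fromRowsCompl_mul {ν : Type*} (A : Matrix S κ ℝ) (B : Matrix ↥Sᶜ κ ℝ) (C : Matrix κ ν ℝ) :
    fromRowsCompl S A B * C = fromRowsCompl S (A * C) (B * C) := by
  ext i j
  by_cases hi : i ∈ S <;> simp [fromRowsCompl, hi, mul_apply]

theorem fromRowsCompl_mul_fromColsCompl (A : Matrix S κ ℝ) (B : Matrix ↥Sᶜ κ ℝ)
    (C : Matrix κ S ℝ) (D : Matrix κ ↥Sᶜ ℝ) :
    fromRowsCompl S A B * fromColsCompl S C D = rcmcAssemble S (A * C) (A * D) (B * C) (B * D) := by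
  ext i j
  by_cases hi : i ∈ S <;> by_cases hj : j ∈ S <;>
    simp [fromRowsCompl, fromColsCompl, rcmcAssemble, hi, hj, mul_apply]

theorem vecMul_fromColsCompl_apply (v : κ → ℝ) (A : Matrix κ S ℝ) (B : Matrix κ ↥Sᶜ ℝ)
    (j : Fin n) : (v ᵥ* fromColsCompl S A B) j =
      if hj : j ∈ S then (v ᵥ* A) ⟨j, hj⟩ else (v ᵥ* B) ⟨j, Finset.mem_compl.2 hj⟩ := by
  by_cases hj : j ∈ S <;> simp [vecMul, dotProduct, fromColsCompl, hj]

end ComplBlocks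

theorem fromRowsCompl_mul_fromColsCompl_mem_colStochastic {n : ℕ} {S : Finset (Fin n)}
    {P : Matrix S ↥Sᶜ ℝ} {Q : Matrix ↥Sᶜ S ℝ} (hP : ∀ i j, 0 ≤ P i j) (hQ : ∀ i j, 0 ≤ Q i j)
    (hQcol : 1 ᵥ* Q = 1) :
    fromRowsCompl S P 1 * (diagonal (1 + 1 ᵥ* P))⁻¹ * fromColsCompl S Q 1 ∈
      colStochastic ℝ (Fin n) := by
  have hRcol : 1 ᵥ* fromRowsCompl S P 1 = 1 + 1 ᵥ* P := by
    rw [one_vecMul_fromRowsCompl, vecMul_one, add_comm]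
  have hone : ∀ i j, 0 ≤ (1 : Matrix ↥Sᶜ ↥Sᶜ ℝ) i j := fun i j => by
    rw [one_apply]
    split_ifs <;> norm_num
  rw [← hRcol]
  refine mul_inv_diagonal_mul_mem_colStochastic (fromRowsCompl_nonneg hP hone)
    (fromColsCompl_nonneg hQ hone) (fun j => ?_) ?_
  · have : 0 ≤ (1 ᵥ* P) j := Finset.sum_nonneg fun i _ => mul_nonneg zero_le_one (hP i j)
    rw [hRcol, Pi.add_apply, Pi.one_apply]
    linarith
  · ext j
    rw [vecMul_fromColsCompl_apply, hQcol, vecMul_one]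
    split_ifs <;> rfl

theorem one_vecMul_neg_submatrix_compl_mul_inv {n : ℕ} {K : Matrix (Fin n) (Fin n) ℝ}
    (hcol : ∀ j, ∑ i, K i j = 0) {S : Finset (Fin n)}
    (hS : IsUnit (K.submatrix ((↑) : S → Fin n) ((↑) : S → Fin n)).det) :
    1 ᵥ* -(K.submatrix ((↑) : ↥Sᶜ → Fin n) ((↑) : S → Fin n) *
      (K.submatrix ((↑) : S → Fin n) ((↑) : S → Fin n))⁻¹) = 1 := by
  have hKcol : 1 ᵥ* K.submatrix ((↑) : S → Fin n) ((↑) : S → Fin n) +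
      1 ᵥ* K.submatrix ((↑) : ↥Sᶜ → Fin n) ((↑) : S → Fin n) = 0 := by
    rw [← one_vecMul_fromRowsCompl, fromRowsCompl_submatrix]
    ext j
    simpa [vecMul, dotProduct] using hcol j
  rw [vecMul_neg, ← vecMul_vecMul, eq_neg_of_add_eq_zero_right hKcol, neg_vecMul, neg_neg,
    vecMul_vecMul, mul_nonsing_inv _ hS, vecMul_one]

theorem rcmc_stmt9_general (n : ℕ) (K : Matrix (Fin n) (Fin n) ℝ)
    (hoff : ∀ i j, i ≠ j → 0 ≤ K i j)
    (hcol : ∀ j, ∑ i, K i j = 0)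
    (S : Finset (Fin n))
    (hinv : IsUnit (K.submatrix ((↑) : ↥S → Fin n) ((↑) : ↥S → Fin n)).det) :
    let KSS := K.submatrix ((↑) : ↥S → Fin n) ((↑) : ↥S → Fin n)
    let KST := K.submatrix ((↑) : ↥S → Fin n) ((↑) : ↥(Sᶜ) → Fin n)
    let KTS := K.submatrix ((↑) : ↥(Sᶜ) → Fin n) ((↑) : ↥S → Fin n)
    let M := 1 + KTS * KSS⁻¹ * KSS⁻¹ * KST
    let VTT := (Matrix.diagonal (fun j : ↥(Sᶜ) => ∑ i : ↥(Sᶜ), M i j))⁻¹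
    let V := rcmcAssemble S (KSS⁻¹ * KST * VTT * KTS * KSS⁻¹)
      (-(KSS⁻¹ * KST * VTT)) (-(VTT * KTS * KSS⁻¹)) VTT
    ∀ p : Fin n → ℝ, (∀ i, 0 ≤ p i) → ∑ i, p i = 1 →
      (∀ i, 0 ≤ V.mulVec p i) ∧ ∑ i, V.mulVec p i = 1 := by
  intro KSS KST KTS M VTT V p hp hps
  have hKinv := inv_submatrix_nonpos hoff (fun j => (hcol j).le) S hinv
  have hP : ∀ i j, 0 ≤ (-(KSS⁻¹ * KST)) i j := by
    rw [← Matrix.neg_mul]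
    exact mul_apply_nonneg (fun i j => neg_nonneg.2 (hKinv i j))
      fun i j => hoff _ _ fun h => Finset.mem_compl.1 j.2 (h ▸ i.2)
  have hQ : ∀ i j, 0 ≤ (-(KTS * KSS⁻¹)) i j := by
    rw [← Matrix.mul_neg]
    exact mul_apply_nonneg (fun i j => hoff _ _ fun h => Finset.mem_compl.1 i.2 (h ▸ j.2))
      fun i j => neg_nonneg.2 (hKinv i j)
  have hQcol : 1 ᵥ* -(KTS * KSS⁻¹) = 1 := one_vecMul_neg_submatrix_compl_mul_inv hcol hinv
  have hVTT : VTT = (diagonal (1 + 1 ᵥ* -(KSS⁻¹ * KST)))⁻¹ := by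
    have hM : M = 1 + -(KTS * KSS⁻¹) * -(KSS⁻¹ * KST) := by
      simp only [M, Matrix.neg_mul, Matrix.mul_neg, neg_neg, Matrix.mul_assoc]
    have hcolM : (fun j => ∑ i, M i j) = 1 ᵥ* M :=
      funext fun j => (Finset.sum_apply j _ _).symm.trans (congrFun (one_vecMul M) j).symm
    change (diagonal fun j => ∑ i, M i j)⁻¹ = _
    rw [hcolM, hM, vecMul_add, vecMul_one, ← vecMul_vecMul, hQcol]
  have hV : V = fromRowsCompl S (-(KSS⁻¹ * KST)) 1 * VTT * fromColsCompl S (-(KTS * KSS⁻¹)) 1 := by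
    rw [fromRowsCompl_mul, fromRowsCompl_mul_fromColsCompl]
    simp only [V, Matrix.one_mul, Matrix.mul_one, Matrix.neg_mul, Matrix.mul_neg, neg_neg,
      Matrix.mul_assoc]
  have hVstoch : V ∈ colStochastic ℝ (Fin n) :=
    hV ▸ hVTT ▸ fromRowsCompl_mul_fromColsCompl_mem_colStochastic hP hQ hQcol
  exact ⟨nonneg_mulVec_of_mem_colStochastic hVstoch hp,
    (sum_mulVec_of_mem_colStochastic hVstoch).trans hps⟩

/-- The Type-A matrix `V` (with `V_TT = diag(1_Tᵀ M)⁻¹`,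
`M = I_T + K_TS K_SS⁻² K_ST`) maps the probability simplex into itself. -/
theorem rcmc_stmt9 (n : ℕ) (K : Matrix (Fin n) (Fin n) ℝ) (π : Fin n → ℝ)
    (hoff : ∀ i j, i ≠ j → 0 ≤ K i j)
    (hcol : ∀ j, ∑ i, K i j = 0)
    (hπpos : ∀ i, 0 < π i) (hπsum : ∑ i, π i = 1)
    (hdb : K * Matrix.diagonal π = Matrix.diagonal π * Kᵀ)
    (S : Finset (Fin n))
    (hinv : IsUnit (K.submatrix ((↑) : ↥S → Fin n) ((↑) : ↥S → Fin n)).det) :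
    let KSS := K.submatrix ((↑) : ↥S → Fin n) ((↑) : ↥S → Fin n)
    let KST := K.submatrix ((↑) : ↥S → Fin n) ((↑) : ↥(Sᶜ) → Fin n)
    let KTS := K.submatrix ((↑) : ↥(Sᶜ) → Fin n) ((↑) : ↥S → Fin n)
    let M := 1 + KTS * KSS⁻¹ * KSS⁻¹ * KST
    let VTT := (Matrix.diagonal (fun j : ↥(Sᶜ) => ∑ i : ↥(Sᶜ), M i j))⁻¹
    let V := rcmcAssemble S (KSS⁻¹ * KST * VTT * KTS * KSS⁻¹)
      (-(KSS⁻¹ * KST * VTT)) (-(VTT * KTS * KSS⁻¹)) VTT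
    ∀ p : Fin n → ℝ, (∀ i, 0 ≤ p i) → ∑ i, p i = 1 →
      (∀ i, 0 ≤ V.mulVec p i) ∧ ∑ i, V.mulVec p i = 1 :=
  rcmc_stmt9_general n K hoff hcol S hinv
end

section
/- The matrix V = Ω* V_{TT} Ω (of either Type A or B) satisfies O ⪯ V ⪯ I_n with respect to the π-inner product; i.e., all eigenvalues of V lie in [0,1]. -/
/-!
Write `C = -K_TS K_SS⁻¹`, so that `Ω a = a_T + C a_S`. Detailed balance makes `-K_SS⁻¹ K_ST` the
adjoint `C*` of `C` for the `π`-weighted inner products, hence `Ω* = (C*, I)`, `M = I + C C*`, and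
`⟨a, V a⟩_π = ⟨u, V_TT u⟩_π` with `u = Ω a`.

Type B: for `w = M⁻¹ u` one has `⟨u, w⟩ = ‖w‖² + ‖C* w‖²` and
`‖a‖² - ⟨u, w⟩ = ‖a_T - w‖² + ‖a_S - C* w‖²`; `V` is the `π`-orthogonal projection onto `range Ω*`.

Type A: `-K_SS` is a nonsingular Z-matrix with nonnegative column sums, so `K_SS⁻¹ ≤ 0`; hence
`C ≥ 0` and every column of `C` sums to `1`. The `t`-th column sum of `M`, times `π_t`, is
`π_t + ∑_s C_ts π_s`, and Cauchy–Schwarz with these weights bounds `u_t² / ((1ᵀM)_t π_t)` by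
`a_t² / π_t + ∑_s C_ts a_s² / π_s`. Summing over `t` gives `‖a‖²_π`.
-/

open Matrix BigOperators

open Finset

theorem Finset.sum_coe_sort_add_sum_coe_sort_compl {ι M : Type*} [Fintype ι] [DecidableEq ι]
    [AddCommMonoid M] (S : Finset ι) (f : ι → M) : ∑ i : S, f i + ∑ i : ↥Sᶜ, f i = ∑ i, f i := by
  rw [sum_coe_sort, sum_coe_sort, sum_add_sum_compl]

theorem Finset.sq_sum_mul_le_sum_mul_mul_sum_div {ι : Type*} (s : Finset ι) {w r x : ι → ℝ}
    (hw : ∀ i ∈ s, 0 ≤ w i) (hr : ∀ i ∈ s, 0 < r i) :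
    (∑ i ∈ s, w i * x i) ^ 2 ≤ (∑ i ∈ s, w i * r i) * ∑ i ∈ s, w i * (x i * x i / r i) :=
  sum_sq_le_sum_mul_sum_of_sq_le_mul s (fun i hi => mul_nonneg (hw i hi) (hr i hi).le)
    (fun i hi => mul_nonneg (hw i hi) (div_nonneg (mul_self_nonneg _) (hr i hi).le))
    (fun i hi => le_of_eq (by field_simp [(hr i hi).ne']))

noncomputable def weightedInner {ι : Type*} [Fintype ι] (w x y : ι → ℝ) : ℝ := ∑ i, x i * y i / w i

namespace weightedInner

variable {ι : Type*} [Fintype ι] (w : ι → ℝ)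

lemma comm (x y : ι → ℝ) : weightedInner w x y = weightedInner w y x := by
  simp only [weightedInner, mul_comm]

lemma add_left (x y z : ι → ℝ) :
    weightedInner w (x + y) z = weightedInner w x z + weightedInner w y z := by
  simp only [weightedInner, Pi.add_apply, add_mul, add_div, sum_add_distrib]

lemma sub_sub_self (x y : ι → ℝ) :
    weightedInner w (x - y) (x - y) =
      weightedInner w x x - 2 * weightedInner w x y + weightedInner w y y := by
  simp only [weightedInner, mul_sum, ← sum_sub_distrib, ← sum_add_distrib]
  exact sum_congr rfl fun i _ => by simp only [Pi.sub_apply]; ring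

variable {w}

lemma self_nonneg (hw : ∀ i, 0 < w i) (x : ι → ℝ) : 0 ≤ weightedInner w x x :=
  sum_nonneg fun i _ => div_nonneg (mul_self_nonneg _) (hw i).le

lemma eq_zero_of_self_eq_zero (hw : ∀ i, 0 < w i) {x : ι → ℝ} (hx : weightedInner w x x = 0) :
    x = 0 := by
  have := (sum_eq_zero_iff_of_nonneg fun i _ => div_nonneg (mul_self_nonneg (x i)) (hw i).le).1 hx
  funext i
  simpa [(hw i).ne'] using this i (mem_univ i)

end weightedInner


noncomputable def weightedAdjoint {σ τ : Type*} (p : σ → ℝ) (q : τ → ℝ) (C : Matrix τ σ ℝ) :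
    Matrix σ τ ℝ :=
  of fun s t => p s * C t s / q t

section WeightedAdjoint

variable {σ τ : Type*} [Fintype σ] [Fintype τ] {p : σ → ℝ} {q : τ → ℝ}

theorem eq_weightedAdjoint_iff [DecidableEq σ] [DecidableEq τ] (hq : ∀ t, q t ≠ 0)
    {C : Matrix τ σ ℝ} {C' : Matrix σ τ ℝ} :
    C' = weightedAdjoint p q C ↔ C' * diagonal q = diagonal p * Cᵀ := by
  simp only [← Matrix.ext_iff, mul_diagonal, diagonal_mul, transpose_apply, weightedAdjoint,
    of_apply, eq_div_iff (hq _)]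

theorem weightedInner_mulVec_weightedAdjoint (hp : ∀ s, p s ≠ 0) (C : Matrix τ σ ℝ)
    (x : σ → ℝ) (y : τ → ℝ) :
    weightedInner p x (weightedAdjoint p q C *ᵥ y) = weightedInner q (C *ᵥ x) y := by
  simp only [weightedInner, weightedAdjoint, mulVec, dotProduct, of_apply, mul_sum, sum_mul,
    sum_div]
  rw [sum_comm]
  refine sum_congr rfl fun t _ => sum_congr rfl fun s _ => ?_
  field_simp [hp s]

end WeightedAdjoint
section ZMatrix

variable {ι : Type*} [Fintype ι] {B : Matrix ι ι ℝ}

theorem Matrix.nonneg_of_nonneg_mulVec (hZ : ∀ i j, i ≠ j → B i j ≤ 0)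
    (hrow : ∀ i, 0 < ∑ j, B i j) {x : ι → ℝ} (hx : 0 ≤ B *ᵥ x) : 0 ≤ x := by
  intro i₀
  by_contra! hi₀
  obtain ⟨m, -, hm⟩ := exists_min_image univ x ⟨i₀, mem_univ i₀⟩
  have hxm : x m < 0 := (hm i₀ (mem_univ i₀)).trans_lt hi₀
  have : (B *ᵥ x) m ≤ (∑ j, B m j) * x m := by
    rw [sum_mul]
    refine sum_le_sum fun j _ => ?_
    rcases eq_or_ne m j with rfl | hne
    · rfl
    · exact mul_le_mul_of_nonpos_left (hm j (mem_univ j)) (hZ m j hne)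
  linarith [show 0 ≤ (B *ᵥ x) m from hx m, mul_neg_of_pos_of_neg (hrow m) hxm]

theorem Matrix.inv_nonneg_of_sum_row_pos [DecidableEq ι] (hZ : ∀ i j, i ≠ j → B i j ≤ 0)
    (hrow : ∀ i, 0 < ∑ j, B i j) (i j : ι) : 0 ≤ B⁻¹ i j := by
  have hdet : IsUnit B.det := by
    refine isUnit_iff_ne_zero.2 fun h => ?_
    obtain ⟨v, hv, hBv⟩ := exists_mulVec_eq_zero_iff.2 h
    have h₁ := nonneg_of_nonneg_mulVec hZ hrow (x := v) (by rw [hBv])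
    have h₂ := nonneg_of_nonneg_mulVec hZ hrow (x := -v) (by rw [mulVec_neg, hBv, neg_zero])
    exact hv (le_antisymm (by simpa using h₂) h₁)
  have hcol := nonneg_of_nonneg_mulVec hZ hrow (x := B⁻¹ *ᵥ Pi.single j 1) (by
    rw [mulVec_mulVec, mul_nonsing_inv B hdet, one_mulVec]
    exact Pi.single_nonneg.2 zero_le_one)
  simpa using hcol i

theorem Matrix.inv_nonneg_of_sum_row_nonneg [DecidableEq ι] (hZ : ∀ i j, i ≠ j → B i j ≤ 0)
    (hrow : ∀ i, 0 ≤ ∑ j, B i j) (hB : IsUnit B.det) (i j : ι) : 0 ≤ B⁻¹ i j := by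
  have hpert : ∀ ε : ℝ, 0 < ε → 0 ≤ (B + ε • 1)⁻¹ i j := fun ε hε =>
    inv_nonneg_of_sum_row_pos
      (fun a b hab => by simpa [one_apply_ne hab] using hZ a b hab)
      (fun a => by simpa [sum_add_distrib, one_apply] using add_pos_of_nonneg_of_pos (hrow a) hε)
      i j
  have hcont : ContinuousAt (fun ε : ℝ => (B + ε • 1)⁻¹ i j) 0 := by
    have hinv : ContinuousAt Inv.inv (B + (0 : ℝ) • 1) := by
      refine continuousAt_matrix_inv _ ?_
      rw [zero_smul, add_zero, Ring.inverse_eq_inv']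
      exact continuousAt_inv₀ hB.ne_zero
    have hpath : ContinuousAt (fun ε : ℝ => B + ε • (1 : Matrix ι ι ℝ)) 0 := by fun_prop
    exact (continuous_apply_apply i j).continuousAt.comp (hinv.comp (x := 0) hpath)
  have := hcont.tendsto.mono_left (nhdsWithin_le_nhds (s := Set.Ioi 0))
  simpa using ge_of_tendsto this (eventually_nhdsWithin_of_forall hpert)

end ZMatrix

section Projection

variable {σ τ : Type*} [Fintype σ] [Fintype τ] [DecidableEq τ] {p : σ → ℝ} {q : τ → ℝ}

theorem weightedInner_one_add_mul_weightedAdjoint_mulVec (hp : ∀ s, p s ≠ 0)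
    (C : Matrix τ σ ℝ) (z : τ → ℝ) :
    weightedInner q z ((1 + C * weightedAdjoint p q C) *ᵥ z) =
      weightedInner q z z +
        weightedInner p (weightedAdjoint p q C *ᵥ z) (weightedAdjoint p q C *ᵥ z) := by
  rw [add_mulVec, one_mulVec, ← mulVec_mulVec, weightedInner.comm q z, weightedInner.add_left,
    weightedInner_mulVec_weightedAdjoint hp, weightedInner.comm q z z]

theorem isUnit_det_one_add_mul_weightedAdjoint (hp : ∀ s, 0 < p s) (hq : ∀ t, 0 < q t)
    (C : Matrix τ σ ℝ) : IsUnit (1 + C * weightedAdjoint p q C).det := by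
  refine isUnit_iff_ne_zero.2 fun h => ?_
  obtain ⟨z, hz, hMz⟩ := exists_mulVec_eq_zero_iff.2 h
  have henergy :=
    weightedInner_one_add_mul_weightedAdjoint_mulVec (q := q) (fun s => (hp s).ne') C z
  rw [hMz, show weightedInner q z 0 = 0 by simp [weightedInner]] at henergy
  have hzz : weightedInner q z z = 0 := le_antisymm
    (by linarith [weightedInner.self_nonneg hp (weightedAdjoint p q C *ᵥ z)])
    (weightedInner.self_nonneg hq z)
  exact hz (weightedInner.eq_zero_of_self_eq_zero hq hzz)

theorem weightedInner_inv_one_add_mul_weightedAdjoint_mulVec (hp : ∀ s, 0 < p s)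
    (hq : ∀ t, 0 < q t) (C : Matrix τ σ ℝ) (x : σ → ℝ) (y : τ → ℝ) :
    0 ≤ weightedInner q (y + C *ᵥ x)
        ((1 + C * weightedAdjoint p q C)⁻¹ *ᵥ (y + C *ᵥ x)) ∧
      weightedInner q (y + C *ᵥ x) ((1 + C * weightedAdjoint p q C)⁻¹ *ᵥ (y + C *ᵥ x)) ≤
        weightedInner p x x + weightedInner q y y := by
  set C' := weightedAdjoint p q C
  set u := y + C *ᵥ x
  set w := (1 + C * C')⁻¹ *ᵥ u
  have hMw : (1 + C * C') *ᵥ w = u := by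
    rw [mulVec_mulVec, mul_nonsing_inv _ (isUnit_det_one_add_mul_weightedAdjoint hp hq C),
      one_mulVec]
  have henergy :
      weightedInner q u w = weightedInner q w w + weightedInner p (C' *ᵥ w) (C' *ᵥ w) := by
    rw [← hMw, weightedInner.comm,
      weightedInner_one_add_mul_weightedAdjoint_mulVec (fun s => (hp s).ne')]
  refine ⟨henergy ▸
    add_nonneg (weightedInner.self_nonneg hq w) (weightedInner.self_nonneg hp _), ?_⟩
  -- complete the square: `‖x‖² + ‖y‖² - ⟨u, w⟩ = ‖y - w‖² + ‖x - C' w‖²`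
  have hu : weightedInner q u w = weightedInner q y w + weightedInner p x (C' *ᵥ w) := by
    rw [weightedInner.add_left, weightedInner_mulVec_weightedAdjoint (fun s => (hp s).ne')]
  linarith [weightedInner.sub_sub_self q y w, weightedInner.sub_sub_self p x (C' *ᵥ w),
    weightedInner.self_nonneg hq (y - w), weightedInner.self_nonneg hp (x - C' *ᵥ w)]

end Projection

theorem sq_add_mulVec_apply_le_mul {σ τ : Type*} [Fintype σ] {p : σ → ℝ} {q : τ → ℝ}
    {C : Matrix τ σ ℝ} (hp : ∀ s, 0 < p s) (hq : ∀ t, 0 < q t) (hC : ∀ t s, 0 ≤ C t s)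
    (x : σ → ℝ) (y : τ → ℝ) (t : τ) :
    (y t + (C *ᵥ x) t) ^ 2 ≤
      (q t + ∑ s, C t s * p s) * (y t * y t / q t + ∑ s, C t s * (x s * x s / p s)) := by
  have := sq_sum_mul_le_sum_mul_mul_sum_div univ (w := fun o : Option σ => o.elim 1 (C t))
    (r := fun o => o.elim (q t) p) (x := fun o => o.elim (y t) x)
    (fun o _ => by cases o <;> simp [hC]) (fun o _ => by cases o <;> simp [hp, hq])
  simpa [Fintype.sum_option, mulVec, dotProduct] using this

section Diagonal

variable {σ τ : Type*} [Fintype σ] [Fintype τ] [DecidableEq τ] {p : σ → ℝ} {q : τ → ℝ}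
  {C : Matrix τ σ ℝ}

theorem sum_col_one_add_mul_weightedAdjoint_mul (hq : ∀ t, q t ≠ 0)
    (hcol : ∀ s, ∑ t, C t s = 1) (t : τ) :
    (∑ t', (1 + C * weightedAdjoint p q C : Matrix τ τ ℝ) t' t) * q t = q t + ∑ s, C t s * p s := by
  simp only [Matrix.add_apply, one_apply, mul_apply, sum_add_distrib, sum_ite_eq', mem_univ,
    if_true, weightedAdjoint, of_apply]
  rw [sum_comm]
  simp_rw [← sum_mul, hcol, one_mul, add_mul, sum_mul]
  congr 1
  · ring
  · exact sum_congr rfl fun s _ => by field_simp [hq t]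

theorem weightedInner_inv_diagonal_sum_col_mulVec (hp : ∀ s, 0 < p s) (hq : ∀ t, 0 < q t)
    (hC : ∀ t s, 0 ≤ C t s) (hcol : ∀ s, ∑ t, C t s = 1) (x : σ → ℝ) (y : τ → ℝ) :
    0 ≤ weightedInner q (y + C *ᵥ x) ((diagonal fun t =>
        ∑ t', (1 + C * weightedAdjoint p q C : Matrix τ τ ℝ) t' t)⁻¹ *ᵥ (y + C *ᵥ x)) ∧
      weightedInner q (y + C *ᵥ x) ((diagonal fun t =>
        ∑ t', (1 + C * weightedAdjoint p q C : Matrix τ τ ℝ) t' t)⁻¹ *ᵥ (y + C *ᵥ x)) ≤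
        weightedInner p x x + weightedInner q y y := by
  set d := fun t => ∑ t', (1 + C * weightedAdjoint p q C : Matrix τ τ ℝ) t' t
  set u := y + C *ᵥ x
  have hdq (t : τ) : d t * q t = q t + ∑ s, C t s * p s :=
    sum_col_one_add_mul_weightedAdjoint_mul (fun t => (hq t).ne') hcol t
  have hdq_pos (t : τ) : 0 < d t * q t := by
    rw [hdq]
    exact add_pos_of_pos_of_nonneg (hq t)
      (sum_nonneg fun s _ => mul_nonneg (hC t s) (hp s).le)
  have hd (t : τ) : d t ≠ 0 := (pos_of_mul_pos_left (hdq_pos t) (hq t).le).ne'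
  have hform : weightedInner q u ((diagonal d)⁻¹ *ᵥ u) = ∑ t, u t ^ 2 / (d t * q t) := by
    rw [inv_eq_left_inv (B := diagonal fun t => (d t)⁻¹) (by
      rw [diagonal_mul_diagonal]; simp [hd])]
    exact sum_congr rfl fun t _ => by rw [mulVec_diagonal]; field_simp [hd t, (hq t).ne']
  rw [hform]
  refine ⟨sum_nonneg fun t _ => div_nonneg (sq_nonneg _) (hdq_pos t).le, ?_⟩
  calc ∑ t, u t ^ 2 / (d t * q t)
      ≤ ∑ t, (y t * y t / q t + ∑ s, C t s * (x s * x s / p s)) := by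
        refine sum_le_sum fun t _ => (div_le_iff₀ (hdq_pos t)).2 ?_
        rw [hdq, mul_comm]
        exact sq_add_mulVec_apply_le_mul hp hq hC x y t
    _ = weightedInner p x x + weightedInner q y y := by
        rw [sum_add_distrib, sum_comm]
        simp_rw [← sum_mul, hcol, one_mul]
        exact add_comm _ _

end Diagonal
theorem weightedInner_eq_add_compl {ι : Type*} [Fintype ι] [DecidableEq ι] (S : Finset ι)
    (w x y : ι → ℝ) :
    weightedInner w x y =
      weightedInner (w ∘ ((↑) : S → ι)) (x ∘ (↑)) (y ∘ (↑)) +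
        weightedInner (w ∘ ((↑) : ↥Sᶜ → ι)) (x ∘ (↑)) (y ∘ (↑)) :=
  (sum_coe_sort_add_sum_coe_sort_compl S _).symm


section Assemble

variable {n : ℕ} {S : Finset (Fin n)} (A : Matrix S S ℝ) (B : Matrix S ↥Sᶜ ℝ)
  (C : Matrix ↥Sᶜ S ℝ) (D : Matrix ↥Sᶜ ↥Sᶜ ℝ)

@[simp] lemma rcmcAssemble_SS (s s' : S) : rcmcAssemble S A B C D s s' = A s s' := by
  simp [rcmcAssemble, s.2, s'.2]

@[simp] lemma rcmcAssemble_ST (s : S) (t : ↥Sᶜ) : rcmcAssemble S A B C D s t = B s t := by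
  simp [rcmcAssemble, s.2, mem_compl.1 t.2]

@[simp] lemma rcmcAssemble_TS (t : ↥Sᶜ) (s : S) : rcmcAssemble S A B C D t s = C t s := by
  simp [rcmcAssemble, s.2, mem_compl.1 t.2]

@[simp] lemma rcmcAssemble_TT (t t' : ↥Sᶜ) : rcmcAssemble S A B C D t t' = D t t' := by
  simp [rcmcAssemble, mem_compl.1 t.2, mem_compl.1 t'.2]

theorem rcmcAssemble_mulVec_comp_coe (a : Fin n → ℝ) :
    (rcmcAssemble S A B C D *ᵥ a) ∘ ((↑) : S → Fin n) = A *ᵥ (a ∘ (↑)) + B *ᵥ (a ∘ (↑)) := by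
  funext s
  simp [mulVec, dotProduct, ← sum_coe_sort_add_sum_coe_sort_compl S]

theorem rcmcAssemble_mulVec_comp_coe_compl (a : Fin n → ℝ) :
    (rcmcAssemble S A B C D *ᵥ a) ∘ ((↑) : ↥Sᶜ → Fin n) = C *ᵥ (a ∘ (↑)) + D *ᵥ (a ∘ (↑)) := by
  funext t
  simp [mulVec, dotProduct, ← sum_coe_sort_add_sum_coe_sort_compl S]

end Assemble

theorem weightedInner_rcmcAssemble_mulVec {n : ℕ} {S : Finset (Fin n)} {π : Fin n → ℝ}
    (hπ : ∀ i, π i ≠ 0) (C : Matrix ↥Sᶜ S ℝ) (C' : Matrix S ↥Sᶜ ℝ) (W : Matrix ↥Sᶜ ↥Sᶜ ℝ)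
    (hC' : C' = weightedAdjoint (π ∘ (↑)) (π ∘ (↑)) C) (a : Fin n → ℝ) :
    weightedInner π a (rcmcAssemble S (C' * W * C) (C' * W) (W * C) W *ᵥ a) =
      weightedInner (π ∘ (↑)) (a ∘ (↑) + C *ᵥ (a ∘ (↑))) (W *ᵥ (a ∘ (↑) + C *ᵥ (a ∘ (↑)))) := by
  rw [weightedInner_eq_add_compl S, rcmcAssemble_mulVec_comp_coe,
    rcmcAssemble_mulVec_comp_coe_compl]
  set u := a ∘ (↑) + C *ᵥ (a ∘ (↑))
  have hS : (C' * W * C) *ᵥ (a ∘ (↑)) + (C' * W) *ᵥ (a ∘ (↑)) = C' *ᵥ (W *ᵥ u) := by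
    simp only [u, mulVec_add, mulVec_mulVec, Matrix.mul_assoc]
    abel
  have hT : (W * C) *ᵥ (a ∘ (↑)) + W *ᵥ (a ∘ (↑)) = W *ᵥ u := by
    simp only [u, mulVec_add, mulVec_mulVec]
    abel
  rw [hS, hT, hC', weightedInner_mulVec_weightedAdjoint
    (p := π ∘ ((↑) : S → Fin n)) (fun s => hπ s), ← weightedInner.add_left,
    add_comm]

section RateMatrix

variable {ι : Type*} [Fintype ι] [DecidableEq ι] {K : Matrix ι ι ℝ} {S : Finset ι}

theorem sum_compl_apply_eq_neg_sum (hcol : ∀ j, ∑ i, K i j = 0) (s : S) :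
    ∑ t : ↥Sᶜ, K t s = -∑ s' : S, K s' s := by
  linarith [sum_coe_sort_add_sum_coe_sort_compl S (K · s), hcol s]

theorem inv_submatrix_nonpos (hoff : ∀ i j, i ≠ j → 0 ≤ K i j) (hcol : ∀ j, ∑ i, K i j = 0)
    (hinv : IsUnit (K.submatrix ((↑) : S → ι) ((↑) : S → ι)).det) (s s' : S) :
    (K.submatrix ((↑) : S → ι) ((↑) : S → ι))⁻¹ s s' ≤ 0 := by
  set A := K.submatrix ((↑) : S → ι) ((↑) : S → ι)
  -- `-Aᵀ` is a Z-matrix whose row sums are the nonnegative outflows from `S`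
  have hB : (-Aᵀ)⁻¹ = -A⁻¹ᵀ := inv_eq_left_inv (by
    rw [neg_mul_neg, ← transpose_mul, mul_nonsing_inv _ hinv, transpose_one])
  have := inv_nonneg_of_sum_row_nonneg (B := -Aᵀ)
    (fun a b hab => by
      simpa [A] using hoff b a fun h => hab (Subtype.ext h.symm))
    (fun a => by
      have hrow : ∑ b, (-Aᵀ) a b = ∑ t : ↥Sᶜ, K t a := by
        simp only [A, Matrix.neg_apply, transpose_apply, submatrix_apply, sum_neg_distrib]
        rw [sum_compl_apply_eq_neg_sum hcol]
      rw [hrow]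
      exact sum_nonneg fun t _ => hoff t a fun h => mem_compl.1 t.2 (h ▸ a.2))
    (by rw [det_neg, det_transpose]; exact ((isUnit_one.neg).pow _).mul hinv) s' s
  simpa [hB] using this

theorem sum_mul_inv_submatrix_apply (hcol : ∀ j, ∑ i, K i j = 0)
    (hinv : IsUnit (K.submatrix ((↑) : S → ι) ((↑) : S → ι)).det) (s : S) :
    ∑ t : ↥Sᶜ, (K.submatrix ((↑) : ↥Sᶜ → ι) ((↑) : S → ι) *
      (K.submatrix ((↑) : S → ι) ((↑) : S → ι))⁻¹) t s = -1 := by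
  simp only [mul_apply]
  rw [sum_comm]
  simp_rw [← sum_mul, submatrix_apply, sum_compl_apply_eq_neg_sum hcol, neg_mul, sum_neg_distrib,
    sum_mul]
  rw [sum_comm]
  simp_rw [← submatrix_apply (A := K) ((↑) : S → ι) ((↑) : S → ι), ← mul_apply,
    mul_nonsing_inv _ hinv, one_apply, sum_ite_eq', mem_univ, if_true]

theorem neg_mul_inv_submatrix_nonneg (hoff : ∀ i j, i ≠ j → 0 ≤ K i j)
    (hcol : ∀ j, ∑ i, K i j = 0) (hinv : IsUnit (K.submatrix ((↑) : S → ι) ((↑) : S → ι)).det)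
    (t : ↥Sᶜ) (s : S) :
    0 ≤ (-(K.submatrix ((↑) : ↥Sᶜ → ι) ((↑) : S → ι) *
      (K.submatrix ((↑) : S → ι) ((↑) : S → ι))⁻¹)) t s := by
  rw [Matrix.neg_apply, mul_apply, ← sum_neg_distrib]
  exact sum_nonneg fun s' _ => neg_nonneg.2 <| mul_nonpos_of_nonneg_of_nonpos
    (hoff t s' fun h => mem_compl.1 t.2 (h ▸ s'.2)) (inv_submatrix_nonpos hoff hcol hinv s' s)

end RateMatrix

section DetailedBalance

variable {ι : Type*} [Fintype ι] [DecidableEq ι] {K : Matrix ι ι ℝ} {π : ι → ℝ}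

theorem submatrix_mul_diagonal_of_mul_diagonal {α β : Type*} [Fintype α] [Fintype β]
    [DecidableEq α] [DecidableEq β]
    (hdb : K * diagonal π = diagonal π * Kᵀ) (f : α → ι) (g : β → ι) :
    K.submatrix f g * diagonal (π ∘ g) = diagonal (π ∘ f) * (K.submatrix g f)ᵀ := by
  ext i j
  simpa [mul_diagonal, diagonal_mul] using congr_fun₂ hdb (f i) (g j)

theorem nonsing_inv_mul_diagonal_of_mul_diagonal {σ : Type*} [Fintype σ] [DecidableEq σ]
    {A : Matrix σ σ ℝ} {d : σ → ℝ} (h : A * diagonal d = diagonal d * Aᵀ) (hA : IsUnit A.det) :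
    A⁻¹ * diagonal d = diagonal d * A⁻¹ᵀ := by
  have hAt : IsUnit Aᵀ.det := by rwa [det_transpose]
  calc A⁻¹ * diagonal d = A⁻¹ * (diagonal d * Aᵀ) * Aᵀ⁻¹ := by
        rw [Matrix.mul_assoc, Matrix.mul_assoc, mul_nonsing_inv _ hAt, Matrix.mul_one]
    _ = diagonal d * A⁻¹ᵀ := by
        rw [← h, nonsing_inv_mul_cancel_left _ _ hA, transpose_nonsing_inv]

theorem neg_inv_mul_submatrix_eq_weightedAdjoint (hπ : ∀ i, π i ≠ 0)
    (hdb : K * diagonal π = diagonal π * Kᵀ) (S : Finset ι)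
    (hinv : IsUnit (K.submatrix ((↑) : S → ι) ((↑) : S → ι)).det) :
    -((K.submatrix ((↑) : S → ι) ((↑) : S → ι))⁻¹ * K.submatrix ((↑) : S → ι) ((↑) : ↥Sᶜ → ι)) =
      weightedAdjoint (π ∘ (↑)) (π ∘ (↑))
        (-(K.submatrix ((↑) : ↥Sᶜ → ι) ((↑) : S → ι) *
          (K.submatrix ((↑) : S → ι) ((↑) : S → ι))⁻¹)) := by
  rw [eq_weightedAdjoint_iff (q := π ∘ ((↑) : ↥Sᶜ → ι)) fun t => hπ t]
  have hSS := submatrix_mul_diagonal_of_mul_diagonal hdb ((↑) : S → ι) ((↑) : S → ι)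
  have hST := submatrix_mul_diagonal_of_mul_diagonal hdb ((↑) : S → ι) ((↑) : ↥Sᶜ → ι)
  have hN := nonsing_inv_mul_diagonal_of_mul_diagonal hSS hinv
  rw [Matrix.neg_mul, Matrix.mul_assoc, hST, ← Matrix.mul_assoc, hN, transpose_neg,
    transpose_mul, Matrix.mul_neg, Matrix.mul_assoc]

end DetailedBalance

theorem rcmc_stmt11_general (n : ℕ) (K : Matrix (Fin n) (Fin n) ℝ) (π : Fin n → ℝ)
    (hoff : ∀ i j, i ≠ j → 0 ≤ K i j)
    (hcol : ∀ j, ∑ i, K i j = 0)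
    (hπpos : ∀ i, 0 < π i)
    (hdb : K * Matrix.diagonal π = Matrix.diagonal π * Kᵀ)
    (S : Finset (Fin n))
    (hinv : IsUnit (K.submatrix ((↑) : ↥S → Fin n) ((↑) : ↥S → Fin n)).det)
    (M VTT : Matrix ↥(Sᶜ) ↥(Sᶜ) ℝ)
    (hM : M = 1 + K.submatrix ((↑) : ↥(Sᶜ) → Fin n) ((↑) : ↥S → Fin n)
      * (K.submatrix ((↑) : ↥S → Fin n) ((↑) : ↥S → Fin n))⁻¹
      * (K.submatrix ((↑) : ↥S → Fin n) ((↑) : ↥S → Fin n))⁻¹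
      * K.submatrix ((↑) : ↥S → Fin n) ((↑) : ↥(Sᶜ) → Fin n))
    (hVTT : VTT = (Matrix.diagonal (fun j : ↥(Sᶜ) => ∑ i : ↥(Sᶜ), M i j))⁻¹ ∨ VTT = M⁻¹) :
    let KSS := K.submatrix ((↑) : ↥S → Fin n) ((↑) : ↥S → Fin n)
    let KST := K.submatrix ((↑) : ↥S → Fin n) ((↑) : ↥(Sᶜ) → Fin n)
    let KTS := K.submatrix ((↑) : ↥(Sᶜ) → Fin n) ((↑) : ↥S → Fin n)
    let V := rcmcAssemble S (KSS⁻¹ * KST * VTT * KTS * KSS⁻¹)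
      (-(KSS⁻¹ * KST * VTT)) (-(VTT * KTS * KSS⁻¹)) VTT
    (∀ a : Fin n → ℝ, 0 ≤ ∑ i, a i * V.mulVec a i / π i) ∧
    (∀ a : Fin n → ℝ, ∑ i, a i * V.mulVec a i / π i ≤ ∑ i, a i * a i / π i) := by
  intro KSS KST KTS V
  set C := -(KTS * KSS⁻¹)
  set C' := weightedAdjoint (π ∘ ((↑) : S → Fin n)) (π ∘ ((↑) : ↥Sᶜ → Fin n)) C
  have hC' : -(KSS⁻¹ * KST) = C' :=
    neg_inv_mul_submatrix_eq_weightedAdjoint (fun i => (hπpos i).ne') hdb S hinv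
  have hV : V = rcmcAssemble S (C' * VTT * C) (C' * VTT) (VTT * C) VTT := by
    simp only [V, C, ← hC', Matrix.neg_mul, Matrix.mul_neg, neg_neg, Matrix.mul_assoc]
  have hM' : M = 1 + C * C' := by
    rw [hM, ← hC']
    simp only [C, Matrix.neg_mul, Matrix.mul_neg, neg_neg, Matrix.mul_assoc]
    rfl
  have hQ (a : Fin n → ℝ) : ∑ i, a i * V.mulVec a i / π i =
      weightedInner (π ∘ (↑)) (a ∘ (↑) + C *ᵥ (a ∘ (↑))) (VTT *ᵥ (a ∘ (↑) + C *ᵥ (a ∘ (↑)))) :=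
    hV ▸ weightedInner_rcmcAssemble_mulVec (fun i => (hπpos i).ne') C C' VTT rfl a
  have hI (a : Fin n → ℝ) : ∑ i, a i * a i / π i =
      weightedInner (π ∘ ((↑) : S → Fin n)) (a ∘ (↑)) (a ∘ (↑)) +
        weightedInner (π ∘ ((↑) : ↥Sᶜ → Fin n)) (a ∘ (↑)) (a ∘ (↑)) :=
    weightedInner_eq_add_compl S π a a
  simp only [hQ, hI]
  rcases hVTT with rfl | rfl <;> rw [hM']
  · have hC (t : ↥Sᶜ) (s : S) : 0 ≤ C t s := neg_mul_inv_submatrix_nonneg hoff hcol hinv t s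
    have hcolC (s : S) : ∑ t, C t s = 1 := by
      simp only [C, Matrix.neg_apply, sum_neg_distrib, neg_eq_iff_eq_neg]
      exact sum_mul_inv_submatrix_apply hcol hinv s
    have := weightedInner_inv_diagonal_sum_col_mulVec (p := π ∘ ((↑) : S → Fin n))
      (q := π ∘ ((↑) : ↥Sᶜ → Fin n)) (fun s => hπpos s) (fun t => hπpos t) hC hcolC
    exact ⟨fun a => (this _ _).1, fun a => (this _ _).2⟩
  · have := weightedInner_inv_one_add_mul_weightedAdjoint_mulVec (p := π ∘ ((↑) : S → Fin n))
      (q := π ∘ ((↑) : ↥Sᶜ → Fin n)) (fun s => hπpos s) (fun t => hπpos t) C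
    exact ⟨fun a => (this _ _).1, fun a => (this _ _).2⟩

/-- The matrix `V` (of Type A or Type B) satisfies `O ⪯ V ⪯ I` with respect
to the `π`-inner product, i.e. its quadratic form lies between `0` and that of `I_n`. -/
theorem rcmc_stmt11 (n : ℕ) (K : Matrix (Fin n) (Fin n) ℝ) (π : Fin n → ℝ)
    (hoff : ∀ i j, i ≠ j → 0 ≤ K i j)
    (hcol : ∀ j, ∑ i, K i j = 0)
    (hπpos : ∀ i, 0 < π i) (hπsum : ∑ i, π i = 1)
    (hdb : K * Matrix.diagonal π = Matrix.diagonal π * Kᵀ)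
    (S : Finset (Fin n))
    (hinv : IsUnit (K.submatrix ((↑) : ↥S → Fin n) ((↑) : ↥S → Fin n)).det)
    (M VTT : Matrix ↥(Sᶜ) ↥(Sᶜ) ℝ)
    (hM : M = 1 + K.submatrix ((↑) : ↥(Sᶜ) → Fin n) ((↑) : ↥S → Fin n)
      * (K.submatrix ((↑) : ↥S → Fin n) ((↑) : ↥S → Fin n))⁻¹
      * (K.submatrix ((↑) : ↥S → Fin n) ((↑) : ↥S → Fin n))⁻¹
      * K.submatrix ((↑) : ↥S → Fin n) ((↑) : ↥(Sᶜ) → Fin n))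
    (hVTT : VTT = (Matrix.diagonal (fun j : ↥(Sᶜ) => ∑ i : ↥(Sᶜ), M i j))⁻¹ ∨ VTT = M⁻¹) :
    let KSS := K.submatrix ((↑) : ↥S → Fin n) ((↑) : ↥S → Fin n)
    let KST := K.submatrix ((↑) : ↥S → Fin n) ((↑) : ↥(Sᶜ) → Fin n)
    let KTS := K.submatrix ((↑) : ↥(Sᶜ) → Fin n) ((↑) : ↥S → Fin n)
    let V := rcmcAssemble S (KSS⁻¹ * KST * VTT * KTS * KSS⁻¹)
      (-(KSS⁻¹ * KST * VTT)) (-(VTT * KTS * KSS⁻¹)) VTT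
    (∀ a : Fin n → ℝ, 0 ≤ ∑ i, a i * V.mulVec a i / π i) ∧
    (∀ a : Fin n → ℝ, ∑ i, a i * V.mulVec a i / π i ≤ ∑ i, a i * a i / π i) :=
  rcmc_stmt11_general n K π hoff hcol hπpos hdb S hinv M VTT hM hVTT
end

section
/- Let a, b > 0 and f(t) = max_{λ<0} min{ −a/λ + e^{tλ}, −λ/b + 1 − e^{tλ} } for t ≥ 0. Then f attains its minimum over t ∈ [0,∞) uniquely at t* = (ln 2)/√(ab), and at the optimum the maximizing λ equals −√(ab). -/
/-! Since `α_t` increases and `β_t` decreases on `(-∞, 0)`, the max-min is the common value at a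
crossing point `x` (one exists by the intermediate value theorem), that is, half of
`α_t x + β_t x = -a/x - x/b + 1`. By AM-GM this sum is at least `2√(ab)/b + 1`, with equality
exactly at `x = -√(ab)`. Hence `f t ≥ √(ab)/b + 1/2`, with equality iff `-√(ab)` is itself a
crossing point, i.e. iff `exp (-t√(ab)) = 1/2`. -/

open Real Set

theorem isGreatest_min_of_monotoneOn_of_antitoneOn {ι β : Type*} [LinearOrder ι] [LinearOrder β]
    {s : Set ι} {f g : ι → β} (hf : MonotoneOn f s) (hg : AntitoneOn g s) {x : ι} (hx : x ∈ s)
    (hfg : f x = g x) : IsGreatest {v | ∃ y ∈ s, v = min (f y) (g y)} (f x) := by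
  refine ⟨⟨x, hx, by rw [← hfg, min_self]⟩, ?_⟩
  rintro _ ⟨y, hy, rfl⟩
  rcases le_total y x with h | h
  · exact (min_le_left _ _).trans (hf hy hx h)
  · exact (min_le_right _ _).trans ((hg hx hy h).trans_eq hfg.symm)

namespace MaxMinExp

noncomputable def α (a t x : ℝ) : ℝ := -a / x + exp (t * x)

noncomputable def β (b t x : ℝ) : ℝ := -x / b + 1 - exp (t * x)

noncomputable def maxMin (a b t : ℝ) : ℝ := sSup {v | ∃ x < 0, v = min (α a t x) (β b t x)}

variable {a b t x : ℝ}

theorem monotoneOn_α (ha : 0 ≤ a) (ht : 0 ≤ t) : MonotoneOn (α a t) (Iio 0) := by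
  intro x hx y hy hxy
  have hdiv : a / -x ≤ a / -y :=
    div_le_div_of_nonneg_left ha (neg_pos.2 hy) (neg_le_neg hxy)
  rw [div_neg, div_neg, ← neg_div, ← neg_div] at hdiv
  exact add_le_add hdiv (exp_le_exp.2 (mul_le_mul_of_nonneg_left hxy ht))

theorem antitoneOn_β (hb : 0 ≤ b) (ht : 0 ≤ t) : AntitoneOn (β b t) (Iio 0) := by
  intro x _ y _ hxy
  unfold β
  gcongr

theorem α_sub_β : α a t x - β b t x = -a / x + x / b - 1 + 2 * exp (t * x) := by
  unfold α β; ring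

theorem α_add_β (ha : 0 ≤ a) (hb : 0 < b) (hx : x ≠ 0) :
    α a t x + β b t x = 2 * (√(a * b) / b) + 1 + (x + √(a * b)) ^ 2 / (b * -x) := by
  unfold α β
  field_simp
  linear_combination sq_sqrt (mul_nonneg ha hb.le)

theorem exists_α_eq_β (ha : 0 < a) (hb : 0 < b) (ht : 0 ≤ t) : ∃ x < 0, α a t x = β b t x := by
  have hcont : ContinuousOn (fun x => α a t x - β b t x) (Iio 0) := by
    unfold α β
    fun_prop (disch := intro x hx; first | exact hb.ne' | exact ne_of_lt hx)
  have hl : -(a + b) ∈ Iio 0 := by simp only [mem_Iio]; linarith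
  have hr : -(a * b / (a + b)) ∈ Iio 0 := by simp only [mem_Iio, Left.neg_neg_iff]; positivity
  have hl_nonpos : α a t (-(a + b)) - β b t (-(a + b)) ≤ 0 := by
    have hexp : exp (t * -(a + b)) ≤ 1 := exp_le_one_iff.2 (by nlinarith)
    have hdiv : a / (a + b) ≤ a / b := div_le_div_of_nonneg_left ha.le hb (by linarith)
    rw [α_sub_β, neg_div_neg_eq, neg_div, add_div, div_self hb.ne']
    linarith
  have hr_nonneg : 0 ≤ α a t (-(a * b / (a + b))) - β b t (-(a * b / (a + b))) := by
    have hexp : 0 < exp (t * -(a * b / (a + b))) := exp_pos _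
    have hdiv : a / (a + b) ≤ a / b := div_le_div_of_nonneg_left ha.le hb (by linarith)
    have h1 : -a / -(a * b / (a + b)) = a / b + 1 := by field_simp
    have h2 : -(a * b / (a + b)) / b = -(a / (a + b)) := by field_simp
    rw [α_sub_β, h1, h2]
    linarith
  obtain ⟨x, hx, hxv⟩ := isPreconnected_Iio.intermediate_value hl hr hcont ⟨hl_nonpos, hr_nonneg⟩
  exact ⟨x, hx, sub_eq_zero.mp hxv⟩

theorem maxMin_eq_α (ha : 0 ≤ a) (hb : 0 ≤ b) (ht : 0 ≤ t) (hx : x < 0)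
    (hαβ : α a t x = β b t x) : maxMin a b t = α a t x :=
  (isGreatest_min_of_monotoneOn_of_antitoneOn (monotoneOn_α ha ht) (antitoneOn_β hb ht) hx
    hαβ).csSup_eq

theorem exists_two_mul_maxMin_eq (ha : 0 < a) (hb : 0 < b) (ht : 0 ≤ t) :
    ∃ x < 0, α a t x = β b t x ∧
      2 * maxMin a b t = 2 * (√(a * b) / b) + 1 + (x + √(a * b)) ^ 2 / (b * -x) := by
  obtain ⟨x, hx, hαβ⟩ := exists_α_eq_β ha hb ht
  refine ⟨x, hx, hαβ, ?_⟩
  rw [← α_add_β ha.le hb hx.ne, maxMin_eq_α ha.le hb.le ht hx hαβ, hαβ, two_mul]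

theorem sqrt_mul_div_add_half_le_maxMin (ha : 0 < a) (hb : 0 < b) (ht : 0 ≤ t) :
    √(a * b) / b + 1 / 2 ≤ maxMin a b t := by
  obtain ⟨x, hx, -, hval⟩ := exists_two_mul_maxMin_eq ha hb ht
  have hgap : 0 ≤ (x + √(a * b)) ^ 2 / (b * -x) :=
    div_nonneg (sq_nonneg _) (mul_nonneg hb.le (neg_nonneg.2 hx.le))
  linarith

theorem α_add_β_neg_sqrt (ha : 0 < a) (hb : 0 < b) :
    α a t (-√(a * b)) + β b t (-√(a * b)) = 2 * (√(a * b) / b) + 1 := by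
  rw [α_add_β ha.le hb (neg_ne_zero.2 (sqrt_pos.2 (mul_pos ha hb)).ne'), neg_add_cancel, sq,
    zero_mul, zero_div, add_zero]

theorem α_eq_β_neg_sqrt_iff (ha : 0 < a) (hb : 0 < b) :
    α a t (-√(a * b)) = β b t (-√(a * b)) ↔ t = log 2 / √(a * b) := by
  have hs : 0 < √(a * b) := sqrt_pos.2 (mul_pos ha hb)
  have hsum := α_add_β_neg_sqrt (t := t) ha hb
  have hβ : β b t (-√(a * b)) = √(a * b) / b + 1 - exp (-(t * √(a * b))) := by
    rw [β, neg_neg, mul_neg]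
  calc α a t (-√(a * b)) = β b t (-√(a * b)) ↔ exp (-(t * √(a * b))) = 2⁻¹ := by
        constructor <;> intro h <;> linarith
    _ ↔ -(t * √(a * b)) = -log 2 := by
        rw [← exp_eq_exp (y := -log 2), exp_neg (log 2), exp_log two_pos]
    _ ↔ t = log 2 / √(a * b) := by rw [neg_inj, eq_div_iff hs.ne']

theorem maxMin_log_two_div (ha : 0 < a) (hb : 0 < b) :
    maxMin a b (log 2 / √(a * b)) = √(a * b) / b + 1 / 2 := by
  have hs : 0 < √(a * b) := sqrt_pos.2 (mul_pos ha hb)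
  have hαβ := (α_eq_β_neg_sqrt_iff (t := log 2 / √(a * b)) ha hb).2 rfl
  have hsum := α_add_β_neg_sqrt (t := log 2 / √(a * b)) ha hb
  rw [maxMin_eq_α ha.le hb.le (by positivity) (neg_lt_zero.2 hs) hαβ]
  linarith

theorem eq_log_two_div_of_maxMin_eq (ha : 0 < a) (hb : 0 < b) (ht : 0 ≤ t)
    (h : maxMin a b t = √(a * b) / b + 1 / 2) : t = log 2 / √(a * b) := by
  obtain ⟨x, hx, hαβ, hval⟩ := exists_two_mul_maxMin_eq ha hb ht
  have hgap : (x + √(a * b)) ^ 2 / (b * -x) = 0 := by linarith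
  have hx_eq : x = -√(a * b) := by
    rcases div_eq_zero_iff.1 hgap with hsq | hden
    · exact eq_neg_of_add_eq_zero_left (pow_eq_zero_iff two_ne_zero |>.1 hsq)
    · nlinarith
  exact (α_eq_β_neg_sqrt_iff ha hb).1 (hx_eq ▸ hαβ)

end MaxMinExp

open MaxMinExp

/-- Let `a, b > 0` and
`f(t) = sup_{λ<0} min{ −a/λ + e^{tλ}, −λ/b + 1 − e^{tλ} }`. Then `f` attains its minimum
over `t ∈ [0,∞)` uniquely at `t* = (ln 2)/√(ab)`, and at the optimum the maximizing `λ`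
equals `−√(ab)`, i.e. `f(t*)` equals the value of the inner `min` at `λ = −√(ab)`. -/
theorem rcmc_stmt19 (a b : ℝ) (ha : 0 < a) (hb : 0 < b) :
    let f : ℝ → ℝ := fun t =>
      sSup {v : ℝ | ∃ lam : ℝ, lam < 0 ∧
        v = min (-a / lam + Real.exp (t * lam)) (-lam / b + 1 - Real.exp (t * lam))}
    let tstar := Real.log 2 / Real.sqrt (a * b)
    let lamstar := -Real.sqrt (a * b)
    (∀ t : ℝ, 0 ≤ t → f tstar ≤ f t) ∧
    (∀ t : ℝ, 0 ≤ t → f t = f tstar → t = tstar) ∧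
    f tstar = min (-a / lamstar + Real.exp (tstar * lamstar))
      (-lamstar / b + 1 - Real.exp (tstar * lamstar)) := by
  intro f tstar lamstar
  have hmin : f tstar = √(a * b) / b + 1 / 2 := maxMin_log_two_div ha hb
  refine ⟨fun t ht => hmin ▸ sqrt_mul_div_add_half_le_maxMin ha hb ht,
    fun t ht h => eq_log_two_div_of_maxMin_eq ha hb ht (h.trans hmin), ?_⟩
  have hαβ : α a tstar lamstar = β b tstar lamstar := (α_eq_β_neg_sqrt_iff ha hb).2 rfl
  change maxMin a b tstar = min (α a tstar lamstar) (β b tstar lamstar)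
  rw [← hαβ, min_self]
  exact maxMin_eq_α ha.le hb.le (by positivity) (neg_lt_zero.2 (sqrt_pos.2 (mul_pos ha hb))) hαβ
end
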